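/- arXiv:alg-geom/9411013 — 4 statements merged into one kernel-verified Lean document; each statement's English description precedes it below -/
import Mathlib

section
/- (Lemma 3.8) Let G = (V,E) be an undirected graph with |V| > 2. If G is decomposable and has a color class Â with Ã = V, then G has a maximal strong partitive set which is not a singleton (i.e., a non-trivial maximal strong partitive set). -/
/-!
A `Γ`-step starting from an edge with both ends in a partitive set `Y` stays inside `Y`, and
when two partitive sets `Y₁, Y₂` cover `V`, a `Γ`-step starting from an edge going from
`Y₁ ∖ Y₂` to `Y₂ ∖ Y₁` again goes from `Y₁ ∖ Y₂` to `Y₂ ∖ Y₁`. As the implication class `A`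
touches every vertex, it follows that no proper partitive set contains an edge of `A`, and
that two overlapping proper partitive sets never cover `V`.

Hence the proper partitive sets through a fixed vertex `x` are closed under binary unions, and
their union `M` is proper: otherwise both ends of an edge of `A` would lie in the union of two
of them, again a proper partitive set.
Every proper partitive set meeting `M` is absorbed into `M`, which makes `M` strong and maximal.
Taking `x` in a non-trivial proper partitive set `X` gives `X ⊆ M`, so `M` is not a singleton.
-/

open Set

namespace TransOrient

variable {V : Type*}

/-- `E` is the edge set of an undirected graph on the vertex type `V`:
an irreflexive and symmetric relation, given as a set of ordered pairs. -/
def IsGraph (E : Set (V × V)) : Prop :=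
  (∀ a : V, (a, a) ∉ E) ∧ (∀ a b : V, (a, b) ∈ E ↔ (b, a) ∈ E)

/-- The forcing relation `Γ` on directed edges:
`(a,b) Γ (a',b')` iff (`a = a'` and `(b,b') ∉ E`) or (`b = b'` and `(a,a') ∉ E`). -/
def Gamma (E : Set (V × V)) (e e' : V × V) : Prop :=
  e ∈ E ∧ e' ∈ E ∧
    ((e.1 = e'.1 ∧ (e.2, e'.2) ∉ E) ∨ (e.2 = e'.2 ∧ (e.1, e'.1) ∉ E))

/-- The implication classes of `G = (V,E)`: equivalence classes on `E` of
the reflexive-transitive closure of `Γ`. -/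
def IsImplicationClass (E : Set (V × V)) (A : Set (V × V)) : Prop :=
  ∃ e ∈ E, A = {e' | Relation.ReflTransGen (Gamma E) e e'}

/-- `A⁻¹ = {(b,a) : (a,b) ∈ A}`. -/
def inv (A : Set (V × V)) : Set (V × V) := {p | (p.2, p.1) ∈ A}

/-- The color class `Â = A ∪ A⁻¹` of an implication class `A`. -/
def hat (A : Set (V × V)) : Set (V × V) := A ∪ inv A

/-- `Ã`: the set of vertices incident to an edge of `A`. -/
def tilde (A : Set (V × V)) : Set V := {v | ∃ w, (v, w) ∈ A ∨ (w, v) ∈ A}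

/-- A transitive orientation `E'` of a symmetric edge set `F`:
`E' ⊆ F`, `E' ∩ E'⁻¹ = ∅`, `E' ∪ E'⁻¹ = F` and `E'` is transitive. -/
def IsTransOrientation (F E' : Set (V × V)) : Prop :=
  E' ⊆ F ∧ E' ∩ inv E' = ∅ ∧ E' ∪ inv E' = F ∧
    ∀ a b c : V, (a, b) ∈ E' → (b, c) ∈ E' → (a, c) ∈ E'

/-- `G` is a comparability graph if `E` admits a transitive orientation. -/
def IsComparability (E : Set (V × V)) : Prop :=
  ∃ E' : Set (V × V), IsTransOrientation E E'

/-- `E(X)`: the set of edges of `E` with both endpoints in `X`. -/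
def edgesOn (E : Set (V × V)) (X : Set V) : Set (V × V) :=
  {p ∈ E | p.1 ∈ X ∧ p.2 ∈ X}

/-- `X` is a partitive set of `G = (V,E)`. -/
def IsPartitive (E : Set (V × V)) (X : Set V) : Prop :=
  ∀ a ∈ X, ∀ b ∈ X, ∀ c ∉ X, ((a, c) ∈ E ↔ (b, c) ∈ E)

/-- `X` is a "strong" partitive set of `G = (V,E)`. -/
def IsStrongPartitive (E : Set (V × V)) (X : Set V) : Prop :=
  IsPartitive E X ∧
    ∀ Y : Set V, IsPartitive E Y → (Y ∩ X).Nonempty → X ⊆ Y ∨ Y ⊆ X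

/-- `X` is a maximal "strong" partitive set of `G = (V,E)`: a strong partitive
set different from `V` which is maximal, for inclusion, among the strong
partitive sets different from `V`. -/
def IsMaxStrongPartitive (E : Set (V × V)) (X : Set V) : Prop :=
  IsStrongPartitive E X ∧ X ≠ Set.univ ∧
    ∀ Y : Set V, IsStrongPartitive E Y → Y ≠ Set.univ → X ⊆ Y → X = Y

/-- `X` is a partitive set of the induced subgraph `G(W) = (W, E(W))`. -/
def IsPartitiveIn (E : Set (V × V)) (W : Set V) (X : Set V) : Prop :=
  X ⊆ W ∧ ∀ a ∈ X, ∀ b ∈ X, ∀ c ∈ W \ X,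
    ((a, c) ∈ edgesOn E W ↔ (b, c) ∈ edgesOn E W)

/-- `X` is a "strong" partitive set of the induced subgraph `G(W)`. -/
def IsStrongPartitiveIn (E : Set (V × V)) (W : Set V) (X : Set V) : Prop :=
  IsPartitiveIn E W X ∧
    ∀ Y : Set V, IsPartitiveIn E W Y → (Y ∩ X).Nonempty → X ⊆ Y ∨ Y ⊆ X

/-- `X` is a maximal "strong" partitive set of the induced subgraph `G(W)`. -/
def IsMaxStrongPartitiveIn (E : Set (V × V)) (W : Set V) (X : Set V) : Prop :=
  IsStrongPartitiveIn E W X ∧ X ≠ W ∧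
    ∀ Y : Set V, IsStrongPartitiveIn E W Y → Y ≠ W → X ⊆ Y → X = Y

/-- Two directed edges lie in the same color class of `G = (V,E)`. -/
def SameColor (E : Set (V × V)) (e e' : V × V) : Prop :=
  ∃ A : Set (V × V), IsImplicationClass E A ∧ e ∈ hat A ∧ e' ∈ hat A

/-- A simplex of `G = (V,E)` given by its (finite, nonempty) vertex set `VS`:
a complete induced subgraph whose edges, for distinct unordered pairs,
lie in distinct color classes of `G`. -/
def IsSimplex (E : Set (V × V)) (VS : Set V) : Prop :=
  VS.Finite ∧ VS.Nonempty ∧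
    (∀ a ∈ VS, ∀ b ∈ VS, a ≠ b → (a, b) ∈ E) ∧
    (∀ a ∈ VS, ∀ b ∈ VS, ∀ c ∈ VS, ∀ d ∈ VS, a ≠ b → c ≠ d →
      SameColor E (a, b) (c, d) → (a = c ∧ b = d) ∨ (a = d ∧ b = c))

/-- The rank of a simplex on `r+1` vertices is `r`. -/
noncomputable def simplexRank (VS : Set V) : ℕ := VS.ncard - 1

/-- A maximal simplex: its vertex set is not properly contained in the
vertex set of another simplex. -/
def IsMaxSimplex (E : Set (V × V)) (VS : Set V) : Prop :=
  IsSimplex E VS ∧ ∀ VS' : Set V, IsSimplex E VS' → VS ⊆ VS' → VS = VS'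

/-- The multiplex `M(S)` generated by a simplex with vertex set `VS`:
the union of all color classes of `G` containing an edge of the simplex. -/
def multiplex (E : Set (V × V)) (VS : Set V) : Set (V × V) :=
  {e | ∃ A : Set (V × V), IsImplicationClass E A ∧ e ∈ hat A ∧
    ∃ a ∈ VS, ∃ b ∈ VS, a ≠ b ∧ (a, b) ∈ hat A}

/-- A maximal multiplex of `G`: a multiplex generated by a maximal simplex. -/
def IsMaxMultiplex (E : Set (V × V)) (M : Set (V × V)) : Prop :=
  ∃ VS : Set V, IsMaxSimplex E VS ∧ M = multiplex E VS

/-- `P` is a partition of the set `W`. -/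
def IsPartitionOf (W : Set V) (P : Set (Set V)) : Prop :=
  (∀ X ∈ P, X.Nonempty) ∧ ⋃₀ P = W ∧
    ∀ X ∈ P, ∀ Y ∈ P, X ≠ Y → X ∩ Y = ∅

/-- Adjacency in the quotient of the induced subgraph `G(W)` by a partition:
two distinct blocks are adjacent iff some pair of representatives is an
edge of `E(W)`. -/
def quotAdj (E : Set (V × V)) (W : Set V) (X Y : Set V) : Prop :=
  X ≠ Y ∧ ∃ x ∈ X, ∃ y ∈ Y, (x, y) ∈ edgesOn E W

/-- A partitive set of an abstract graph with vertex set `W` and adjacency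
relation `Adj`. -/
def IsPartitiveGen {α : Type*} (W : Set α) (Adj : α → α → Prop) (X : Set α) : Prop :=
  X ⊆ W ∧ ∀ a ∈ X, ∀ b ∈ X, ∀ c ∈ W \ X, (Adj a c ↔ Adj b c)

/-- An abstract graph `(W, Adj)` is indecomposable if all its partitive
sets are trivial. -/
def IndecomposableGen {α : Type*} (W : Set α) (Adj : α → α → Prop) : Prop :=
  ∀ X : Set α, IsPartitiveGen W Adj X → X.Subsingleton ∨ X = W

/-- An isomorphism between the graphs `(Vα, Aα)` and `(Vβ, Aβ)`:
a bijection of the vertex sets preserving adjacency in both directions. -/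
def GraphIso {α β : Type*} (Vα : Set α) (Aα : α → α → Prop)
    (Vβ : Set β) (Aβ : β → β → Prop) : Prop :=
  ∃ f : α → β, Set.BijOn f Vα Vβ ∧
    ∀ a ∈ Vα, ∀ b ∈ Vα, (Aα a b ↔ Aβ (f a) (f b))

/-- `(V', E')` is a subgraph of the induced subgraph `G(W)` of `G = (V,E)`. -/
def IsSubgraphOf (E : Set (V × V)) (W : Set V) (V' : Set V) (E' : Set (V × V)) : Prop :=
  V' ⊆ W ∧ E' ⊆ edgesOn E W ∧ (∀ e ∈ E', e.1 ∈ V' ∧ e.2 ∈ V') ∧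
    (∀ a b : V, (a, b) ∈ E' ↔ (b, a) ∈ E')

end TransOrient

namespace TransOrient

variable {V : Type*} {E A : Set (V × V)}

lemma IsImplicationClass.nonempty (hA : IsImplicationClass E A) : A.Nonempty := by
  obtain ⟨e, -, rfl⟩ := hA
  exact ⟨e, .refl⟩

lemma gamma_symm (hG : IsGraph E) {e e' : V × V} (h : Gamma E e e') : Gamma E e' e := by
  obtain ⟨he, he', h | h⟩ := h
  · exact ⟨he', he, .inl ⟨h.1.symm, fun h' => h.2 ((hG.2 _ _).1 h')⟩⟩
  · exact ⟨he', he, .inr ⟨h.1.symm, fun h' => h.2 ((hG.2 _ _).1 h')⟩⟩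

def IsGammaClosed (E S : Set (V × V)) : Prop :=
  ∀ e e', Gamma E e e' → e ∈ S → e' ∈ S

lemma IsImplicationClass.subset_of_isGammaClosed (hG : IsGraph E)
    (hA : IsImplicationClass E A) {S : Set (V × V)} (hS : IsGammaClosed E S) {e : V × V}
    (he : e ∈ A) (heS : e ∈ S) : A ⊆ S := by
  obtain ⟨e₀, -, rfl⟩ := hA
  have : Std.Symm (Gamma E) := ⟨fun _ _ => gamma_symm hG⟩
  intro e' he'
  have hreach : Relation.ReflTransGen (Gamma E) e e' := (symm_of _ he).trans he'
  clear he'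
  induction hreach with
  | refl => exact heS
  | tail _ hγ ih => exact hS _ _ hγ ih

lemma tilde_subset_union_of_subset_prod {P Q : Set V} (h : A ⊆ P ×ˢ Q) : tilde A ⊆ P ∪ Q := by
  rintro v ⟨w, hvw | hwv⟩
  · exact .inl (h hvw).1
  · exact .inr (h hwv).2

lemma IsPartitive.isGammaClosed_prod_self (hG : IsGraph E) {Y : Set V}
    (hY : IsPartitive E Y) : IsGammaClosed E (Y ×ˢ Y) := by
  rintro ⟨a, b⟩ ⟨a', b'⟩ ⟨-, he', ⟨rfl, hbb'⟩ | ⟨rfl, haa'⟩⟩ ⟨ha, hb⟩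
  · exact ⟨ha, by_contra fun hb' => hbb' ((hY a ha b hb b' hb').1 he')⟩
  · exact ⟨by_contra fun ha' => haa' ((hY b hb a ha a' ha').1 ((hG.2 _ _).1 he')), hb⟩

lemma IsPartitive.isGammaClosed_prod_diff (hG : IsGraph E) {Y₁ Y₂ : Set V}
    (h₁ : IsPartitive E Y₁) (h₂ : IsPartitive E Y₂) (hcover : Y₁ ∪ Y₂ = univ) :
    IsGammaClosed E ((Y₁ \ Y₂) ×ˢ (Y₂ \ Y₁)) := by
  have hmem : ∀ v, v ∈ Y₁ ∨ v ∈ Y₂ := fun v => hcover.ge (mem_univ v)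
  rintro ⟨a, b⟩ ⟨a', b'⟩ ⟨he, he', ⟨rfl, hbb'⟩ | ⟨rfl, haa'⟩⟩ ⟨⟨ha₁, ha₂⟩, ⟨hb₂, hb₁⟩⟩
  · have hb'₁ : b' ∉ Y₁ := fun hb'₁ =>
      hbb' ((hG.2 _ _).1 ((h₁ a ha₁ b' hb'₁ b hb₁).1 he))
    exact ⟨⟨ha₁, ha₂⟩, (hmem b').resolve_left hb'₁, hb'₁⟩
  · have ha'₂ : a' ∉ Y₂ := fun ha'₂ =>
      haa' ((hG.2 _ _).1 ((h₂ b hb₂ a' ha'₂ a ha₂).1 ((hG.2 _ _).1 he)))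
    exact ⟨⟨(hmem a').resolve_right ha'₂, ha'₂⟩, hb₂, hb₁⟩

lemma IsPartitive.sUnion {F : Set (Set V)} {x : V} (hF : ∀ Y ∈ F, IsPartitive E Y ∧ x ∈ Y) :
    IsPartitive E (⋃₀ F) := by
  rintro a ⟨Ya, hYa, ha⟩ b ⟨Yb, hYb, hb⟩ c hc
  have hca : c ∉ Ya := fun h => hc ⟨Ya, hYa, h⟩
  have hcb : c ∉ Yb := fun h => hc ⟨Yb, hYb, h⟩
  exact ((hF Ya hYa).1 a ha x (hF Ya hYa).2 c hca).trans
    ((hF Yb hYb).1 x (hF Yb hYb).2 b hb c hcb)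

lemma IsPartitive.union {Y₁ Y₂ : Set V} (h₁ : IsPartitive E Y₁) (h₂ : IsPartitive E Y₂) {x : V}
    (hx₁ : x ∈ Y₁) (hx₂ : x ∈ Y₂) : IsPartitive E (Y₁ ∪ Y₂) := by
  rw [← sUnion_pair]
  exact IsPartitive.sUnion (x := x) (by rintro Y (rfl | rfl) <;> simp_all)

lemma eq_univ_of_mem_prod_self (hG : IsGraph E) (hA : IsImplicationClass E A)
    (hspan : tilde A = univ) {Y : Set V} (hY : IsPartitive E Y) {e : V × V} (he : e ∈ A)
    (heY : e ∈ Y ×ˢ Y) : Y = univ := by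
  have h := tilde_subset_union_of_subset_prod
    (hA.subset_of_isGammaClosed hG (hY.isGammaClosed_prod_self hG) he heY)
  rwa [hspan, union_self, univ_subset_iff] at h

lemma union_ne_univ_of_inter_nonempty (hG : IsGraph E) (hA : IsImplicationClass E A)
    (hspan : tilde A = univ) {Y₁ Y₂ : Set V} (h₁ : IsPartitive E Y₁) (h₁ne : Y₁ ≠ univ)
    (h₂ : IsPartitive E Y₂) (h₂ne : Y₂ ≠ univ) (hI : (Y₁ ∩ Y₂).Nonempty) :
    Y₁ ∪ Y₂ ≠ univ := by
  intro hcover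
  obtain ⟨⟨p, q⟩, hpq⟩ := hA.nonempty
  wlog hp₁ : p ∈ Y₁ generalizing Y₁ Y₂
  · exact this h₂ h₂ne h₁ h₁ne (inter_comm Y₁ Y₂ ▸ hI) (union_comm Y₁ Y₂ ▸ hcover)
      ((hcover.ge (mem_univ p)).resolve_left hp₁)
  have hq₁ : q ∉ Y₁ := fun hq₁ => h₁ne (eq_univ_of_mem_prod_self hG hA hspan h₁ hpq ⟨hp₁, hq₁⟩)
  have hq₂ : q ∈ Y₂ := (hcover.ge (mem_univ q)).resolve_left hq₁
  have hp₂ : p ∉ Y₂ := fun hp₂ => h₂ne (eq_univ_of_mem_prod_self hG hA hspan h₂ hpq ⟨hp₂, hq₂⟩)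
  have hsub := tilde_subset_union_of_subset_prod (hA.subset_of_isGammaClosed hG
    (h₁.isGammaClosed_prod_diff hG h₂ hcover) hpq ⟨⟨hp₁, hp₂⟩, hq₂, hq₁⟩)
  obtain ⟨z, hz₁, hz₂⟩ := hI
  rcases hsub (hspan ▸ mem_univ z) with ⟨-, hz⟩ | ⟨-, hz⟩
  exacts [hz hz₂, hz hz₁]

def properPartitiveUnion (E : Set (V × V)) (x : V) : Set V :=
  ⋃₀ {Y | IsPartitive E Y ∧ Y ≠ univ ∧ x ∈ Y}

lemma isPartitive_properPartitiveUnion (x : V) : IsPartitive E (properPartitiveUnion E x) :=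
  IsPartitive.sUnion fun _ hY => ⟨hY.1, hY.2.2⟩

lemma subset_properPartitiveUnion {Y : Set V} (hY : IsPartitive E Y) (hYne : Y ≠ univ) {x : V}
    (hx : x ∈ Y) : Y ⊆ properPartitiveUnion E x :=
  subset_sUnion_of_mem ⟨hY, hYne, hx⟩

lemma subset_properPartitiveUnion_of_inter_nonempty (hG : IsGraph E)
    (hA : IsImplicationClass E A) (hspan : tilde A = univ) {Y : Set V} (hY : IsPartitive E Y)
    (hYne : Y ≠ univ) {x : V} (hI : (Y ∩ properPartitiveUnion E x).Nonempty) :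
    Y ⊆ properPartitiveUnion E x := by
  obtain ⟨z, hzY, Y', ⟨hY', hY'ne, hxY'⟩, hzY'⟩ := hI
  have hne := union_ne_univ_of_inter_nonempty hG hA hspan hY hYne hY' hY'ne ⟨z, hzY, hzY'⟩
  exact subset_union_left.trans
    (subset_properPartitiveUnion (hY.union hY' hzY hzY') hne (.inr hxY'))

lemma properPartitiveUnion_ne_univ (hG : IsGraph E) (hA : IsImplicationClass E A)
    (hspan : tilde A = univ) (x : V) : properPartitiveUnion E x ≠ univ := by
  intro hM
  obtain ⟨⟨p, q⟩, hpq⟩ := hA.nonempty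
  obtain ⟨Y₁, ⟨h₁, h₁ne, hx₁⟩, hp⟩ : p ∈ properPartitiveUnion E x := hM ▸ mem_univ p
  obtain ⟨Y₂, ⟨h₂, h₂ne, hx₂⟩, hq⟩ : q ∈ properPartitiveUnion E x := hM ▸ mem_univ q
  exact union_ne_univ_of_inter_nonempty hG hA hspan h₁ h₁ne h₂ h₂ne ⟨x, hx₁, hx₂⟩
    (eq_univ_of_mem_prod_self hG hA hspan (h₁.union h₂ hx₁ hx₂) hpq ⟨.inl hp, .inr hq⟩)

lemma isMaxStrongPartitive_properPartitiveUnion (hG : IsGraph E) (hA : IsImplicationClass E A)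
    (hspan : tilde A = univ) {x : V} (hM : (properPartitiveUnion E x).Nonempty) :
    IsMaxStrongPartitive E (properPartitiveUnion E x) := by
  have hsub {Y : Set V} (hY : IsPartitive E Y) (hYne : Y ≠ univ) :=
    subset_properPartitiveUnion_of_inter_nonempty hG hA hspan hY hYne (x := x)
  refine ⟨⟨isPartitive_properPartitiveUnion x, fun Y hY hI => ?_⟩,
    properPartitiveUnion_ne_univ hG hA hspan x, fun Y hY hYne hMY => ?_⟩
  · by_cases hYne : Y = univ
    · exact .inl (hYne ▸ subset_univ _)
    · exact .inr (hsub hY hYne hI)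
  · exact hMY.antisymm (hsub hY.1 hYne (hM.mono fun _ h => ⟨hMY h, h⟩))

end TransOrient

open TransOrient in
theorem decomposable_spanning_color_has_nontrivial_max_strong_general
    {V : Type*} (E : Set (V × V)) (hG : IsGraph E)
    (hdec : ∃ X : Set V, IsPartitive E X ∧ ¬ X.Subsingleton ∧ X ≠ Set.univ)
    (A : Set (V × V)) (hA : IsImplicationClass E A) (hspan : tilde A = Set.univ) :
    ∃ X : Set V, IsMaxStrongPartitive E X ∧ ¬ X.Subsingleton := by
  obtain ⟨X, hX, hXnt, hXne⟩ := hdec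
  obtain ⟨x, hx⟩ := (not_subsingleton_iff.1 hXnt).nonempty
  have hXM := subset_properPartitiveUnion hX hXne hx
  exact ⟨_, isMaxStrongPartitive_properPartitiveUnion hG hA hspan ⟨x, hXM hx⟩,
    fun h => hXnt (h.anti hXM)⟩

open TransOrient in
/-- **(Lemma 3.8)** If `|V| > 2`, `G` is decomposable and has a color class `Â`
with `Ã = V`, then `G` has a non-trivial maximal strong partitive set. -/
theorem decomposable_spanning_color_has_nontrivial_max_strong
    {V : Type*} (E : Set (V × V)) (hG : IsGraph E)
    (hcard : 2 < Cardinal.mk V)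
    (hdec : ∃ X : Set V, IsPartitive E X ∧ ¬ X.Subsingleton ∧ X ≠ Set.univ)
    (A : Set (V × V)) (hA : IsImplicationClass E A) (hspan : tilde A = Set.univ) :
    ∃ X : Set V, IsMaxStrongPartitive E X ∧ ¬ X.Subsingleton :=
  decomposable_spanning_color_has_nontrivial_max_strong_general E hG hdec A hA hspan
end

section
/- (Lemma 4.1) Let G = (V,E) be a graph and let X and Y be partitive sets of G with X ⊆ Y. Then: (i) if X is a strong partitive set of G, then X is a strong partitive set of the induced subgraph G(Y); (ii) if Y is a strong partitive set of G, then X is a strong partitive set of G if and only if X is a strong partitive set of G(Y). -/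
open Set

open TransOrient in
/-- **(Lemma 4.1)** For partitive sets `X ⊆ Y` of `G`:
(i) if `X` is strong in `G` then `X` is strong in `G(Y)`;
(ii) if `Y` is strong in `G`, then `X` is strong in `G` iff `X` is strong in `G(Y)`. -/
theorem strong_partitive_induced_subgraph
    {V : Type*} (E : Set (V × V)) (hG : IsGraph E)
    (X Y : Set V) (hX : IsPartitive E X) (hY : IsPartitive E Y) (hXY : X ⊆ Y) :
    (IsStrongPartitive E X → IsStrongPartitiveIn E Y X) ∧
    (IsStrongPartitive E Y → (IsStrongPartitive E X ↔ IsStrongPartitiveIn E Y X)) := by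
  have hdown : ∀ Z : Set V, Z ⊆ Y → IsPartitive E Z → IsPartitiveIn E Y Z := by
    intro Z hZY hZ
    refine ⟨hZY, ?_⟩
    intro a ha b hb c hc
    have h := hZ a ha b hb c hc.2
    simp only [edgesOn, Set.mem_setOf_eq]
    constructor
    · rintro ⟨he, -, -⟩; exact ⟨h.mp he, hZY hb, hc.1⟩
    · rintro ⟨he, -, -⟩; exact ⟨h.mpr he, hZY ha, hc.1⟩
  have hup : ∀ Z : Set V, IsPartitiveIn E Y Z → IsPartitive E Z := by
    intro Z hZ a ha b hb c hc
    have hZY := hZ.1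
    by_cases hcY : c ∈ Y
    · have h := hZ.2 a ha b hb c ⟨hcY, hc⟩
      simp only [edgesOn, Set.mem_setOf_eq] at h
      constructor
      · intro he; exact (h.mp ⟨he, hZY ha, hcY⟩).1
      · intro he; exact (h.mpr ⟨he, hZY hb, hcY⟩).1
    · exact hY a (hZY ha) b (hZY hb) c hcY
  have part1 : IsStrongPartitive E X → IsStrongPartitiveIn E Y X := by
    rintro ⟨-, hS⟩
    refine ⟨hdown X hXY hX, ?_⟩
    intro Z hZ hne
    exact hS Z (hup Z hZ) hne
  refine ⟨part1, fun hYS => ⟨part1, fun hXS => ?_⟩⟩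
  refine ⟨hX, ?_⟩
  intro Z hZ hne
  obtain ⟨x, hxZ, hxX⟩ := hne
  rcases hYS.2 Z hZ ⟨x, hxZ, hXY hxX⟩ with hYZ | hZY
  · left; exact hXY.trans hYZ
  · exact hXS.2 Z (hdown Z hZY hZ) ⟨x, hxZ, hxX⟩
end

section
/- (Proposition 4.3) Let M = M(S) be a multiplex of an undirected graph G = (V,E) generated by a simplex S, with rank(M) ≥ 2. Then for every x ∈ M̃ there exist implication classes A and B of G with Â ⊆ M and B̂ ⊆ M such that Ã∖B̃ ≠ ∅, B̃∖Ã ≠ ∅, and x ∈ Ã ∩ B̃. -/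
open Set

namespace TransOrientAux
open TransOrient Relation

variable {V : Type*} {E : Set (V × V)}

/-- The implication class containing a given edge. -/
def classOf (E : Set (V × V)) (e : V × V) : Set (V × V) :=
  {e' | Relation.ReflTransGen (Gamma E) e e'}

lemma gamma_symm (hG : IsGraph E) {e e' : V × V} (h : Gamma E e e') : Gamma E e' e := by
  obtain ⟨h1, h2, h3 | h3⟩ := h
  · exact ⟨h2, h1, Or.inl ⟨h3.1.symm, fun hm => h3.2 ((hG.2 _ _).mp hm)⟩⟩
  · exact ⟨h2, h1, Or.inr ⟨h3.1.symm, fun hm => h3.2 ((hG.2 _ _).mp hm)⟩⟩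

lemma rtg_symm (hG : IsGraph E) {e e' : V × V}
    (h : ReflTransGen (Gamma E) e e') : ReflTransGen (Gamma E) e' e := by
  induction h with
  | refl => exact ReflTransGen.refl
  | tail _ step ih => exact ReflTransGen.head (gamma_symm hG step) ih

lemma rtg_mem {e e' : V × V} (he : e ∈ E) (h : ReflTransGen (Gamma E) e e') : e' ∈ E := by
  induction h with
  | refl => exact he
  | tail _ step _ => exact step.2.1

lemma mem_classOf_self (e : V × V) : e ∈ classOf E e := ReflTransGen.refl

lemma classOf_isImpl {e : V × V} (he : e ∈ E) : IsImplicationClass E (classOf E e) :=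
  ⟨e, he, rfl⟩

lemma classOf_eq_of_mem (hG : IsGraph E) {e e' : V × V}
    (h : e' ∈ classOf E e) : classOf E e' = classOf E e := by
  ext f
  exact ⟨fun hf => Relation.ReflTransGen.trans h hf,
    fun hf => Relation.ReflTransGen.trans (rtg_symm hG h) hf⟩

lemma impl_eq_classOf (hG : IsGraph E) {A : Set (V × V)} (hA : IsImplicationClass E A)
    {e : V × V} (he : e ∈ A) : A = classOf E e ∧ e ∈ E := by
  obtain ⟨e0, he0, rfl⟩ := hA
  exact ⟨(classOf_eq_of_mem hG he).symm, rtg_mem he0 he⟩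

lemma gamma_swap (hG : IsGraph E) {e e' : V × V} (h : Gamma E e e') :
    Gamma E e.swap e'.swap := by
  obtain ⟨h1, h2, h3 | h3⟩ := h
  · exact ⟨(hG.2 _ _).mp h1, (hG.2 _ _).mp h2, Or.inr h3⟩
  · exact ⟨(hG.2 _ _).mp h1, (hG.2 _ _).mp h2, Or.inl h3⟩

lemma rtg_swap (hG : IsGraph E) {e e' : V × V}
    (h : ReflTransGen (Gamma E) e e') : ReflTransGen (Gamma E) e.swap e'.swap := by
  induction h with
  | refl => exact ReflTransGen.refl
  | tail _ step ih => exact ih.tail (gamma_swap hG step)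

lemma inv_classOf (hG : IsGraph E) (a b : V) :
    inv (classOf E (a, b)) = classOf E (b, a) := by
  ext ⟨u, v⟩
  exact ⟨fun h => rtg_swap hG h, fun h => rtg_swap hG h⟩

lemma hat_classOf_swap (hG : IsGraph E) (a b : V) :
    hat (classOf E (a, b)) = hat (classOf E (b, a)) := by
  unfold hat
  rw [inv_classOf hG, inv_classOf hG, Set.union_comm]

lemma hat_eq_classOf (hG : IsGraph E) {A : Set (V × V)} (hA : IsImplicationClass E A)
    {e : V × V} (he : e ∈ hat A) : hat A = hat (classOf E e) ∧ e ∈ E := by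
  obtain ⟨e1, e2⟩ := e
  rcases he with he | he
  · obtain ⟨hAe, heE⟩ := impl_eq_classOf hG hA he
    exact ⟨by rw [hAe], heE⟩
  · obtain ⟨hAe, heE⟩ := impl_eq_classOf hG hA he
    refine ⟨?_, (hG.2 e2 e1).mp heE⟩
    rw [hAe, hat_classOf_swap hG]

lemma hat_eq_of_mem_hat (hG : IsGraph E) {A B : Set (V × V)}
    (hA : IsImplicationClass E A) (hB : IsImplicationClass E B)
    {e : V × V} (heA : e ∈ hat A) (heB : e ∈ hat B) : hat A = hat B := by
  rw [(hat_eq_classOf hG hA heA).1, (hat_eq_classOf hG hB heB).1]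

/-- **Triangle Lemma** (Golumbic): if `(p,q) ∈ A`, `(r,q) ∈ B`, `(r,p) ∈ C`
form a triangle with `Â ≠ B̂` and `Â ≠ Ĉ`, then for every edge `(b,c)` in the
implication class of `(p,q)` we have `(r,c) ∈ B` and `(r,b) ∈ C`. -/
lemma triangle (hG : IsGraph E) {r p q : V}
    (hrp : (r, p) ∈ E) (hrq : (r, q) ∈ E) (hpq : (p, q) ∈ E)
    (hAB : hat (classOf E (p, q)) ≠ hat (classOf E (r, q)))
    (hAC : hat (classOf E (p, q)) ≠ hat (classOf E (r, p)))
    {e : V × V} (h : Relation.ReflTransGen (Gamma E) (p, q) e) :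
    Relation.ReflTransGen (Gamma E) (r, q) (r, e.2) ∧
      Relation.ReflTransGen (Gamma E) (r, p) (r, e.1) := by
  induction h with
  | refl => exact ⟨ReflTransGen.refl, ReflTransGen.refl⟩
  | @tail b c hb step ih =>
    obtain ⟨hbE, hcE, hstep⟩ := step
    have hrb2E : (r, b.2) ∈ E := rtg_mem hrq ih.1
    have hrb1E : (r, b.1) ∈ E := rtg_mem hrp ih.2
    rcases hstep with ⟨h1, h2⟩ | ⟨h1, h2⟩
    · -- b.1 = c.1 and (b.2, c.2) ∉ E
      have hrc2E : (r, c.2) ∈ E := by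
        by_contra hn
        have hc1rE : (c.1, r) ∈ E := by
          rw [← h1]; exact (hG.2 _ _).mp hrb1E
        have hstep2 : Gamma E c (c.1, r) :=
          ⟨hcE, hc1rE, Or.inl ⟨rfl, fun hm => hn ((hG.2 _ _).mp hm)⟩⟩
        have hc1r : (c.1, r) ∈ classOf E (p, q) :=
          (hb.tail ⟨hbE, hcE, Or.inl ⟨h1, h2⟩⟩).tail hstep2
        have hrc1 : (r, c.1) ∈ classOf E (r, p) := by
          rw [← h1]; exact ih.2
        exact hAC (hat_eq_of_mem_hat hG (classOf_isImpl hpq) (classOf_isImpl hrp)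
          (Set.mem_union_left _ hc1r) (Set.mem_union_right _ hrc1))
      refine ⟨ih.1.tail ⟨hrb2E, hrc2E, Or.inl ⟨rfl, h2⟩⟩, ?_⟩
      rw [← h1]; exact ih.2
    · -- b.2 = c.2 and (b.1, c.1) ∉ E
      have hrc1E : (r, c.1) ∈ E := by
        by_contra hn
        have hrc2E : (r, c.2) ∈ E := by
          rw [← h1]; exact hrb2E
        have hstep2 : Gamma E c (r, c.2) :=
          ⟨hcE, hrc2E, Or.inr ⟨rfl, fun hm => hn ((hG.2 _ _).mp hm)⟩⟩
        have hrc2 : (r, c.2) ∈ classOf E (p, q) :=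
          (hb.tail ⟨hbE, hcE, Or.inr ⟨h1, h2⟩⟩).tail hstep2
        have hrc2B : (r, c.2) ∈ classOf E (r, q) := by
          rw [← h1]; exact ih.1
        exact hAB (hat_eq_of_mem_hat hG (classOf_isImpl hpq) (classOf_isImpl hrq)
          (Set.mem_union_left _ hrc2) (Set.mem_union_left _ hrc2B))
      refine ⟨?_, ih.2.tail ⟨hrb1E, hrc1E, Or.inl ⟨rfl, h2⟩⟩⟩
      rw [← h1]; exact ih.1

/-- The apex of the triangle is not incident to any edge of the class `A`. -/
lemma apex_not_tilde (hG : IsGraph E) {r p q : V}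
    (hrp : (r, p) ∈ E) (hrq : (r, q) ∈ E) (hpq : (p, q) ∈ E)
    (hAB : hat (classOf E (p, q)) ≠ hat (classOf E (r, q)))
    (hAC : hat (classOf E (p, q)) ≠ hat (classOf E (r, p))) :
    r ∉ tilde (classOf E (p, q)) := by
  rintro ⟨w, hw | hw⟩
  · exact hG.1 r (rtg_mem hrp (triangle hG hrp hrq hpq hAB hAC hw).2)
  · exact hG.1 r (rtg_mem hrq (triangle hG hrp hrq hpq hAB hAC hw).1)

lemma hat_ne_of_simplex (hG : IsGraph E) {VS : Set V} (hS : IsSimplex E VS)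
    {a b c d : V} (ha : a ∈ VS) (hb : b ∈ VS) (hc : c ∈ VS) (hd : d ∈ VS)
    (hab : a ≠ b) (hcd : c ≠ d) (hne : ¬((a = c ∧ b = d) ∨ (a = d ∧ b = c))) :
    hat (classOf E (a, b)) ≠ hat (classOf E (c, d)) := by
  intro hEq
  have habE : (a, b) ∈ E := hS.2.2.1 a ha b hb hab
  refine hne (hS.2.2.2 a ha b hb c hc d hd hab hcd
    ⟨classOf E (a, b), classOf_isImpl habE, Set.mem_union_left _ (mem_classOf_self _), ?_⟩)
  rw [hEq]
  exact Set.mem_union_left _ (mem_classOf_self _)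

lemma hat_subset_multiplex {VS : Set V} {s t : V} (hs : s ∈ VS) (ht : t ∈ VS)
    (hst : s ≠ t) (hE : (s, t) ∈ E) :
    hat (classOf E (s, t)) ⊆ multiplex E VS := fun e he =>
  ⟨classOf E (s, t), classOf_isImpl hE, he, s, hs, t, ht, hst,
    Set.mem_union_left _ (mem_classOf_self _)⟩

lemma tilde_hat (A : Set (V × V)) : tilde (hat A) = tilde A := by
  ext v
  simp only [tilde, hat, inv, Set.mem_setOf_eq, Set.mem_union]
  constructor
  · rintro ⟨w, (h | h) | (h | h)⟩
    exacts [⟨w, Or.inl h⟩, ⟨w, Or.inr h⟩, ⟨w, Or.inr h⟩, ⟨w, Or.inl h⟩]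
  · rintro ⟨w, h | h⟩
    exacts [⟨w, Or.inl (Or.inl h)⟩, ⟨w, Or.inr (Or.inl h)⟩]

end TransOrientAux

open TransOrient TransOrientAux in
/-- **(Proposition 4.3)** If `M = M(S)` has rank `≥ 2`, then every vertex of
`M̃` lies in `Ã ∩ B̃` for two colors `Â, B̂ ⊆ M` with `Ã ∖ B̃ ≠ ∅` and
`B̃ ∖ Ã ≠ ∅`. -/
theorem vertex_of_high_rank_multiplex_in_two_colors
    {V : Type*} (E : Set (V × V)) (hG : IsGraph E)
    (VS : Set V) (hS : IsSimplex E VS) (hrank : 2 ≤ simplexRank VS)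
    (x : V) (hx : x ∈ tilde (multiplex E VS)) :
    ∃ A B : Set (V × V), IsImplicationClass E A ∧ IsImplicationClass E B ∧
      hat A ⊆ multiplex E VS ∧ hat B ⊆ multiplex E VS ∧
      (tilde A \ tilde B).Nonempty ∧ (tilde B \ tilde A).Nonempty ∧
      x ∈ tilde A ∩ tilde B := by
  have hcomp := hS.2.2.1
  have hcard : 3 ≤ VS.ncard := by
    unfold simplexRank at hrank
    omega
  obtain ⟨w0, hw0⟩ := hx
  have key : ∃ A0 : Set (V × V), IsImplicationClass E A0 ∧ x ∈ tilde A0 ∧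
      ∃ p0 ∈ VS, ∃ q0 ∈ VS, p0 ≠ q0 ∧ (p0, q0) ∈ hat A0 := by
    rcases hw0 with h | h
    · obtain ⟨A0, hA0, hmem, p0, hp0, q0, hq0, hpq0, hsimp⟩ := h
      refine ⟨A0, hA0, ?_, p0, hp0, q0, hq0, hpq0, hsimp⟩
      rcases hmem with hm | hm
      · exact ⟨w0, Or.inl hm⟩
      · exact ⟨w0, Or.inr hm⟩
    · obtain ⟨A0, hA0, hmem, p0, hp0, q0, hq0, hpq0, hsimp⟩ := h
      refine ⟨A0, hA0, ?_, p0, hp0, q0, hq0, hpq0, hsimp⟩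
      rcases hmem with hm | hm
      · exact ⟨w0, Or.inr hm⟩
      · exact ⟨w0, Or.inl hm⟩
  obtain ⟨A0, hA0, hxA0, p, hp, q, hq, hpqne, hpqhat⟩ := key
  have hpqE : (p, q) ∈ E := hcomp p hp q hq hpqne
  have hhatA : hat A0 = hat (classOf E (p, q)) := (hat_eq_classOf hG hA0 hpqhat).1
  have hxA : x ∈ tilde (classOf E (p, q)) := by
    rw [← tilde_hat (classOf E (p, q)), ← hhatA, tilde_hat]; exact hxA0
  have hr : ∃ r ∈ VS, r ≠ p ∧ r ≠ q := by
    by_contra hcon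
    push_neg at hcon
    have hsub : VS ⊆ {p, q} := by
      intro v hv
      by_cases hvp : v = p
      · exact Or.inl hvp
      · exact Or.inr (hcon v hv hvp)
    have hle := Set.ncard_le_ncard hsub (Set.toFinite _)
    have h2 : ({p, q} : Set V).ncard ≤ 2 := by
      refine le_trans (Set.ncard_insert_le _ _) ?_
      simp [Set.ncard_singleton]
    omega
  obtain ⟨r, hrVS, hrp, hrq⟩ := hr
  have hrpE : (r, p) ∈ E := hcomp r hrVS p hp hrp
  have hrqE : (r, q) ∈ E := hcomp r hrVS q hq hrq
  have hAB : hat (classOf E (p, q)) ≠ hat (classOf E (r, q)) := by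
    refine hat_ne_of_simplex hG hS hp hq hrVS hq hpqne hrq ?_
    rintro (⟨h1, -⟩ | ⟨h1, -⟩)
    · exact hrp h1.symm
    · exact hpqne h1
  have hAC : hat (classOf E (p, q)) ≠ hat (classOf E (r, p)) := by
    refine hat_ne_of_simplex hG hS hp hq hrVS hp hpqne hrp ?_
    rintro (⟨h1, -⟩ | ⟨-, h2⟩)
    · exact hrp h1.symm
    · exact hrq h2.symm
  have hBpq : hat (classOf E (r, q)) ≠ hat (classOf E (p, q)) := hAB.symm
  have hBpr : hat (classOf E (r, q)) ≠ hat (classOf E (p, r)) := by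
    refine hat_ne_of_simplex hG hS hrVS hq hp hrVS hrq (Ne.symm hrp) ?_
    rintro (⟨h1, -⟩ | ⟨-, h2⟩)
    · exact hrp h1
    · exact hpqne h2.symm
  have hCqp : hat (classOf E (r, p)) ≠ hat (classOf E (q, p)) := by
    refine hat_ne_of_simplex hG hS hrVS hp hq hp hrp (Ne.symm hpqne) ?_
    rintro (⟨h1, -⟩ | ⟨h1, -⟩)
    · exact hrq h1
    · exact hrp h1
  have hCqr : hat (classOf E (r, p)) ≠ hat (classOf E (q, r)) := by
    refine hat_ne_of_simplex hG hS hrVS hp hq hrVS hrp (Ne.symm hrq) ?_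
    rintro (⟨h1, -⟩ | ⟨-, h2⟩)
    · exact hrq h1
    · exact hpqne h2
  have hr_notA : r ∉ tilde (classOf E (p, q)) := apex_not_tilde hG hrpE hrqE hpqE hAB hAC
  have hprE : (p, r) ∈ E := (hG.2 _ _).mp hrpE
  have hqrE : (q, r) ∈ E := (hG.2 _ _).mp hrqE
  have hqpE : (q, p) ∈ E := (hG.2 _ _).mp hpqE
  have hp_notB : p ∉ tilde (classOf E (r, q)) := apex_not_tilde hG hprE hpqE hrqE hBpq hBpr
  have hq_notC : q ∉ tilde (classOf E (r, p)) := apex_not_tilde hG hqrE hqpE hrpE hCqp hCqr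
  have hpA : p ∈ tilde (classOf E (p, q)) := ⟨q, Or.inl (mem_classOf_self _)⟩
  have hqA : q ∈ tilde (classOf E (p, q)) := ⟨p, Or.inr (mem_classOf_self _)⟩
  have hrB : r ∈ tilde (classOf E (r, q)) := ⟨q, Or.inl (mem_classOf_self _)⟩
  have hrC : r ∈ tilde (classOf E (r, p)) := ⟨p, Or.inl (mem_classOf_self _)⟩
  obtain ⟨w1, hw1 | hw1⟩ := hxA
  · -- (x, w1) ∈ A : pair it with C = classOf (r, p)
    have hxC : x ∈ tilde (classOf E (r, p)) :=
      ⟨r, Or.inr (triangle hG hrpE hrqE hpqE hAB hAC hw1).2⟩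
    exact ⟨classOf E (p, q), classOf E (r, p), classOf_isImpl hpqE, classOf_isImpl hrpE,
      hat_subset_multiplex hp hq hpqne hpqE, hat_subset_multiplex hrVS hp hrp hrpE,
      ⟨q, hqA, hq_notC⟩, ⟨r, hrC, hr_notA⟩, ⟨⟨w1, Or.inl hw1⟩, hxC⟩⟩
  · -- (w1, x) ∈ A : pair it with B = classOf (r, q)
    have hxB : x ∈ tilde (classOf E (r, q)) :=
      ⟨r, Or.inr (triangle hG hrpE hrqE hpqE hAB hAC hw1).1⟩
    exact ⟨classOf E (p, q), classOf E (r, q), classOf_isImpl hpqE, classOf_isImpl hrqE,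
      hat_subset_multiplex hp hq hpqne hpqE, hat_subset_multiplex hrVS hq hrq hrqE,
      ⟨p, hpA, hp_notB⟩, ⟨r, hrB, hr_notA⟩, ⟨⟨w1, Or.inr hw1⟩, hxB⟩⟩
end

section
/- (Theorem 4.4) Let M = M(S) be a multiplex of an undirected graph G = (V,E) generated by a simplex S = (V_S,E_S), and suppose F_M is a partition of M̃ each of whose blocks is a maximal strong partitive set of the induced subgraph G(M̃). Then: (ii) if rank(M) = 1, either the quotient graph G(M̃)/F_M is isomorphic to S, or G(M̃)/F_M is indecomposable and isomorphic to a subgraph G′ = (V′,E′) of G(M̃) with E′ ⊆ M; (iii) if rank(M) ≥ 2, then G(M̃)/F_M is isomorphic to S. -/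
open Set

/-!
Every vertex of `M̃` is joined to a vertex of the simplex by a co-path (a path of non-edges),
because a `Γ`-step moves one end of an edge along a non-edge. When distinct simplex vertices lie in
distinct co-components of `G(M̃)`, the co-components are exactly the maximal strong partitive sets,
one for each simplex vertex, and the quotient is `S`. This is always the case in rank at least 2:
by the Triangle Lemma, along a co-path from `s` every other simplex vertex `u` keeps seeing the
current vertex through the implication class of `us`, so the path never reaches `u`.

Otherwise the rank is 1, `M̃` is the span of the color class `Â` of the edge `st`, and `G(M̃)` is
connected and co-connected. Two partitive sets covering `M̃` are then nested, and a partitive set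
containing `s` and `t` contains `M̃`; so the union of all proper partitive sets containing a given
one is proper and strong, which makes the quotient indecomposable. The edges of an indecomposable
graph form a single color class, and `Γ`-steps of the quotient lift to `G` once one quotient edge
carries `Â` on all pairs of its blocks, which an edge with private neighbours on both sides
provides. Hence every edge between distinct blocks lies in `Â`, and one vertex from each block
spans the required subgraph.
-/

namespace TransOrient

open Relation

variable {α : Type*} {E : Set (α × α)}

lemma reflTransGen_symm {r : α → α → Prop} (hr : ∀ a b, r a b → r b a) {a b : α}
    (h : ReflTransGen r a b) : ReflTransGen r b a :=
  reflTransGen_swap.1 (ReflTransGen.mono hr _ _ h)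

lemma mem_of_reflTransGen {r : α → α → Prop} {Z : Set α} (hZ : ∀ x y, x ∈ Z → r x y → y ∈ Z)
    {a b : α} (h : ReflTransGen r a b) (ha : a ∈ Z) : b ∈ Z := by
  induction h with
  | refl => exact ha
  | tail _ hbc ih => exact hZ _ _ ih hbc

section ImplicationClass

def implClass (E : Set (α × α)) (e : α × α) : Set (α × α) :=
  {e' | ReflTransGen (Gamma E) e e'}

lemma implClass_subset {e : α × α} (he : e ∈ E) : implClass E e ⊆ E := by
  intro f hf
  induction hf with
  | refl => exact he
  | tail _ h _ => exact h.2.1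

variable (hG : IsGraph E)
include hG

lemma Gamma.symm {e e' : α × α} (h : Gamma E e e') : Gamma E e' e := by
  obtain ⟨he, he', h | h⟩ := h
  · exact ⟨he', he, Or.inl ⟨h.1.symm, fun hc => h.2 ((hG.2 _ _).1 hc)⟩⟩
  · exact ⟨he', he, Or.inr ⟨h.1.symm, fun hc => h.2 ((hG.2 _ _).1 hc)⟩⟩

lemma Gamma.swap {e e' : α × α} (h : Gamma E e e') : Gamma E e.swap e'.swap := by
  obtain ⟨he, he', h⟩ := h
  exact ⟨(hG.2 _ _).1 he, (hG.2 _ _).1 he', h.symm⟩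

lemma implClass_eq_of_mem {e f : α × α} (hf : f ∈ implClass E e) :
    implClass E f = implClass E e := by
  ext g
  exact ⟨hf.trans, (reflTransGen_symm (fun _ _ h => h.symm hG) hf).trans⟩

lemma IsImplicationClass.eq_implClass {A : Set (α × α)} (hA : IsImplicationClass E A)
    {f : α × α} (hf : f ∈ A) : A = implClass E f := by
  obtain ⟨e, -, rfl⟩ := hA
  exact (implClass_eq_of_mem hG hf).symm

lemma swap_mem_implClass {e f : α × α} (hf : f ∈ implClass E e) :
    f.swap ∈ implClass E e.swap := by
  induction hf with
  | refl => exact ReflTransGen.refl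
  | tail _ h ih => exact ih.tail (h.swap hG)

omit hG in
lemma swap_mem_hat {A : Set (α × α)} {e : α × α} (h : e ∈ hat A) : e.swap ∈ hat A :=
  h.symm

lemma hat_implClass_swap (e : α × α) : hat (implClass E e.swap) = hat (implClass E e) := by
  suffices ∀ e : α × α, hat (implClass E e.swap) ⊆ hat (implClass E e) from
    (this e).antisymm (by simpa using this e.swap)
  intro e f hf
  rcases hf with hf | hf
  · exact Or.inr (swap_mem_implClass hG hf)
  · exact Or.inl (swap_mem_implClass hG hf)

lemma hat_implClass_comm (a b : α) : hat (implClass E (a, b)) = hat (implClass E (b, a)) :=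
  hat_implClass_swap hG (b, a)

lemma hat_implClass_subset {e : α × α} (he : e ∈ E) : hat (implClass E e) ⊆ E := by
  rintro f (hf | hf)
  · exact implClass_subset he hf
  · exact (hG.2 _ _).1 (implClass_subset he hf)

lemma hat_implClass_eq_of_mem {e f : α × α} (hf : f ∈ hat (implClass E e)) :
    hat (implClass E f) = hat (implClass E e) := by
  rcases hf with hf | hf
  · rw [implClass_eq_of_mem hG hf]
  · rw [← hat_implClass_swap hG f]
    exact congrArg hat (implClass_eq_of_mem hG hf)

lemma mem_hat_implClass_step_right {e : α × α} (he : e ∈ E) {x y y' : α}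
    (h : (x, y) ∈ hat (implClass E e)) (hyy' : (y, y') ∉ E) (hxy' : (x, y') ∈ E) :
    (x, y') ∈ hat (implClass E e) := by
  rcases h with h | h
  · exact Or.inl (h.tail ⟨implClass_subset he h, hxy', Or.inl ⟨rfl, hyy'⟩⟩)
  · exact Or.inr (h.tail ⟨implClass_subset he h, (hG.2 _ _).1 hxy', Or.inr ⟨rfl, hyy'⟩⟩)

lemma mem_hat_implClass_step_left {e : α × α} (he : e ∈ E) {x x' y : α}
    (h : (x, y) ∈ hat (implClass E e)) (hxx' : (x, x') ∉ E) (hx'y : (x', y) ∈ E) :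
    (x', y) ∈ hat (implClass E e) :=
  swap_mem_hat (mem_hat_implClass_step_right hG he (swap_mem_hat h) hxx' ((hG.2 _ _).1 hx'y))

end ImplicationClass

section PartitiveSets

variable {W : Set α} {a b : α}

lemma IsPartitiveIn.adj_iff {Y : Set α} (hY : IsPartitiveIn E W Y) (ha : a ∈ Y) (hb : b ∈ Y)
    {c : α} (hc : c ∈ W) (hcY : c ∉ Y) : (a, c) ∈ E ↔ (b, c) ∈ E :=
  ⟨fun h => ((hY.2 a ha b hb c ⟨hc, hcY⟩).1 ⟨h, hY.1 ha, hc⟩).1,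
    fun h => ((hY.2 a ha b hb c ⟨hc, hcY⟩).2 ⟨h, hY.1 hb, hc⟩).1⟩

lemma IsPartitiveIn.sUnion {𝒴 : Set (Set α)} (h𝒴 : ∀ Y ∈ 𝒴, IsPartitiveIn E W Y) {z : α}
    (hz : ∀ Y ∈ 𝒴, z ∈ Y) : IsPartitiveIn E W (⋃₀ 𝒴) :=
  ⟨sUnion_subset fun Y hY => (h𝒴 Y hY).1, fun a ⟨A, hA, ha⟩ b ⟨B, hB, hb⟩ c hc =>
    ((h𝒴 A hA).2 a ha z (hz A hA) c ⟨hc.1, fun h => hc.2 ⟨A, hA, h⟩⟩).trans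
      ((h𝒴 B hB).2 z (hz B hB) b hb c ⟨hc.1, fun h => hc.2 ⟨B, hB, h⟩⟩)⟩

lemma IsPartitiveIn.union {Y Z : Set α} (hY : IsPartitiveIn E W Y) (hZ : IsPartitiveIn E W Z)
    (hYZ : (Y ∩ Z).Nonempty) : IsPartitiveIn E W (Y ∪ Z) := by
  obtain ⟨z, hzY, hzZ⟩ := hYZ
  rw [← sUnion_pair]
  exact IsPartitiveIn.sUnion (by rintro _ (rfl | rfl) <;> assumption)
    (by rintro _ (rfl | rfl) <;> assumption)

lemma isPartitiveIn_of_forall_adj {Y : Set α} (hYW : Y ⊆ W)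
    (hY : ∀ a ∈ Y, ∀ c ∈ W \ Y, (a, c) ∈ E) : IsPartitiveIn E W Y :=
  ⟨hYW, fun a ha b hb c hc =>
    ⟨fun _ => ⟨hY b hb c hc, hYW hb, hc.1⟩, fun _ => ⟨hY a ha c hc, hYW ha, hc.1⟩⟩⟩

end PartitiveSets

section Span

lemma fst_mem_tilde {A : Set (α × α)} {e : α × α} (h : e ∈ A) : e.1 ∈ tilde A :=
  ⟨e.2, Or.inl h⟩

lemma snd_mem_tilde {A : Set (α × α)} {e : α × α} (h : e ∈ A) : e.2 ∈ tilde A :=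
  ⟨e.1, Or.inr h⟩

lemma tilde_hat (A : Set (α × α)) : tilde (hat A) = tilde A := by
  ext v
  constructor
  · rintro ⟨w, (h | h) | (h | h)⟩
    exacts [⟨w, Or.inl h⟩, ⟨w, Or.inr h⟩, ⟨w, Or.inr h⟩, ⟨w, Or.inl h⟩]
  · rintro ⟨w, h | h⟩
    exacts [⟨w, Or.inl (Or.inl h)⟩, ⟨w, Or.inr (Or.inl h)⟩]

variable (hG : IsGraph E)
include hG

lemma tilde_implClass_swap (e : α × α) : tilde (implClass E e.swap) = tilde (implClass E e) := by
  rw [← tilde_hat, hat_implClass_swap hG, tilde_hat]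

lemma tilde_implClass_subset_of_isPartitiveIn {W X : Set α} (hX : IsPartitiveIn E W X)
    {e : α × α} (hW : tilde (implClass E e) ⊆ W) (h1 : e.1 ∈ X) (h2 : e.2 ∈ X) :
    tilde (implClass E e) ⊆ X := by
  have key : ∀ f ∈ implClass E e, f.1 ∈ X ∧ f.2 ∈ X := by
    intro f hf
    induction hf with
    | refl => exact ⟨h1, h2⟩
    | @tail f g hf hfg ih =>
      have hg : g ∈ implClass E e := hf.tail hfg
      have hg1 : g.1 ∈ W := hW (fst_mem_tilde hg)
      have hg2 : g.2 ∈ W := hW (snd_mem_tilde hg)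
      rcases hfg.2.2 with ⟨heq, hne⟩ | ⟨heq, hne⟩
      · exact ⟨heq ▸ ih.1, by_contra fun hg2X =>
          hne ((hX.adj_iff ih.1 ih.2 hg2 hg2X).1 (heq ▸ hfg.2.1))⟩
      · exact ⟨by_contra fun hg1X =>
          hne ((hX.adj_iff ih.2 ih.1 hg1 hg1X).1 (heq ▸ (hG.2 _ _).1 hfg.2.1)), heq ▸ ih.2⟩
  rintro v ⟨w, h | h⟩
  exacts [(key _ h).1, (key _ h).2]

lemma adj_fst_iff_adj_snd {e f : α × α} (hf : f ∈ implClass E e) {v : α}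
    (hv : v ∉ tilde (implClass E e)) (he : e ∈ E) : (f.1, v) ∈ E ↔ (f.2, v) ∈ E := by
  have hfE := implClass_subset he hf
  constructor
  · intro h1
    by_contra h2
    exact hv (snd_mem_tilde (hf.tail ⟨hfE, h1, Or.inl ⟨rfl, h2⟩⟩))
  · intro h2
    by_contra h1
    exact hv (fst_mem_tilde (hf.tail ⟨hfE, (hG.2 _ _).1 h2, Or.inr ⟨rfl, h1⟩⟩))

lemma isPartitive_tilde_implClass {e : α × α} (he : e ∈ E) :
    IsPartitive E (tilde (implClass E e)) := by
  intro a ha b hb v hv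
  have key : ∀ f ∈ implClass E e,
      ((f.1, v) ∈ E ↔ (e.1, v) ∈ E) ∧ ((f.2, v) ∈ E ↔ (e.1, v) ∈ E) := by
    intro f hf
    induction hf with
    | refl => exact ⟨Iff.rfl, (adj_fst_iff_adj_snd hG ReflTransGen.refl hv he).symm⟩
    | @tail f g hf hfg ih =>
      have hg := adj_fst_iff_adj_snd hG (hf.tail hfg) hv he
      rcases hfg.2.2 with ⟨heq, -⟩ | ⟨heq, -⟩
      · exact ⟨heq ▸ ih.1, hg.symm.trans (heq ▸ ih.1)⟩
      · exact ⟨hg.trans (heq ▸ ih.2), heq ▸ ih.2⟩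
  have end_iff : ∀ u ∈ tilde (implClass E e), ((u, v) ∈ E ↔ (e.1, v) ∈ E) := by
    rintro u ⟨w, h | h⟩
    exacts [(key _ h).1, (key _ h).2]
  exact (end_iff a ha).trans (end_iff b hb).symm

/-- Golumbic's Triangle Lemma. -/
lemma triangle {a b c : α} (hab : (a, b) ∈ E) (hac : (a, c) ∈ E)
    (hB : hat (implClass E (b, c)) ≠ hat (implClass E (a, b)))
    (hC : hat (implClass E (b, c)) ≠ hat (implClass E (a, c))) :
    ∀ f ∈ implClass E (b, c), (a, f.1) ∈ implClass E (a, b) ∧ (a, f.2) ∈ implClass E (a, c) := by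
  intro f hf
  induction hf with
  | refl => exact ⟨ReflTransGen.refl, ReflTransGen.refl⟩
  | @tail f g hf hfg ih =>
    obtain ⟨f1, f2⟩ := f
    obtain ⟨g1, g2⟩ := g
    have hg : (g1, g2) ∈ implClass E (b, c) := hf.tail hfg
    rcases hfg.2.2 with ⟨rfl, hne⟩ | ⟨rfl, hne⟩
    · have hag2 : (a, g2) ∈ E := by
        by_contra hag2
        have hgb : (f1, g2) ∈ hat (implClass E (a, b)) :=
          mem_hat_implClass_step_right hG hab (Or.inr ih.1) hag2 hfg.2.1
        exact hB (by rw [← hat_implClass_eq_of_mem hG (Or.inl hg : (f1, g2) ∈ hat _),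
          hat_implClass_eq_of_mem hG hgb])
      exact ⟨ih.1, ih.2.tail ⟨implClass_subset hac ih.2, hag2, Or.inl ⟨rfl, hne⟩⟩⟩
    · have hag1 : (a, g1) ∈ E := by
        by_contra hag1
        have hgc : (g1, f2) ∈ hat (implClass E (a, c)) :=
          mem_hat_implClass_step_left hG hac (Or.inl ih.2) hag1 hfg.2.1
        exact hC (by rw [← hat_implClass_eq_of_mem hG (Or.inl hg : (g1, f2) ∈ hat _),
          hat_implClass_eq_of_mem hG hgc])
      exact ⟨ih.1.tail ⟨implClass_subset hab ih.1, hag1, Or.inl ⟨rfl, hne⟩⟩, ih.2⟩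

lemma adj_of_mem_tilde_of_hat_ne {a b c : α} (hab : (a, b) ∈ E) (hac : (a, c) ∈ E)
    (hB : hat (implClass E (b, c)) ≠ hat (implClass E (a, b)))
    (hC : hat (implClass E (b, c)) ≠ hat (implClass E (a, c))) {w : α}
    (hw : w ∈ tilde (implClass E (b, c))) : (a, w) ∈ E := by
  obtain ⟨z, h | h⟩ := hw
  · exact implClass_subset hab (triangle hG hab hac hB hC _ h).1
  · exact implClass_subset hac (triangle hG hab hac hB hC _ h).2

lemma hat_eq_or_hat_eq_of_mem_tilde {a b c : α} (hab : (a, b) ∈ E) (hac : (a, c) ∈ E)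
    (ha : a ∈ tilde (implClass E (b, c))) :
    hat (implClass E (b, c)) = hat (implClass E (a, b)) ∨
      hat (implClass E (b, c)) = hat (implClass E (a, c)) := by
  by_contra! h
  exact hG.1 a (adj_of_mem_tilde_of_hat_ne hG hab hac h.1 h.2 ha)

end Span

section Reachability

def CoReachable (E : Set (α × α)) (W : Set α) : α → α → Prop :=
  ReflTransGen fun x y => x ∈ W ∧ y ∈ W ∧ (x, y) ∉ E

def Reachable (E : Set (α × α)) (W : Set α) : α → α → Prop :=
  ReflTransGen fun x y => x ∈ W ∧ y ∈ W ∧ (x, y) ∈ E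

def coComponent (E : Set (α × α)) (W : Set α) (v : α) : Set α :=
  {y | CoReachable E W v y}

variable {W : Set α} {a b : α}

lemma CoReachable.mem (h : CoReachable E W a b) (ha : a ∈ W) : b ∈ W :=
  mem_of_reflTransGen (fun _ _ _ hxy => hxy.2.1) h ha

lemma CoReachable.symm (hG : IsGraph E) (h : CoReachable E W a b) : CoReachable E W b a :=
  reflTransGen_symm (fun _ _ h => ⟨h.2.1, h.1, fun hc => h.2.2 ((hG.2 _ _).1 hc)⟩) h

lemma Reachable.symm (hG : IsGraph E) (h : Reachable E W a b) : Reachable E W b a :=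
  reflTransGen_symm (fun _ _ h => ⟨h.2.1, h.1, (hG.2 _ _).1 h.2.2⟩) h

lemma CoReachable.mem_of_forall_adj {Z : Set α} (hZ : ∀ z ∈ Z, ∀ w ∈ W, w ∉ Z → (z, w) ∈ E)
    (h : CoReachable E W a b) (ha : a ∈ Z) : b ∈ Z :=
  mem_of_reflTransGen (fun x y hx hxy => by_contra fun hy => hxy.2.2 (hZ x hx y hxy.2.1 hy)) h ha

lemma Reachable.mem_of_forall_not_adj {Z : Set α} (hZ : ∀ z ∈ Z, ∀ w ∈ W, w ∉ Z → (z, w) ∉ E)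
    (h : Reachable E W a b) (ha : a ∈ Z) : b ∈ Z :=
  mem_of_reflTransGen (fun x y hx hxy => by_contra fun hy => hZ x hx y hxy.2.1 hy hxy.2.2) h ha

lemma coReachable_of_mem_implClass {e : α × α} (hW : tilde (implClass E e) ⊆ W) {f : α × α}
    (hf : f ∈ implClass E e) : CoReachable E W e.1 f.1 ∧ CoReachable E W e.2 f.2 := by
  induction hf with
  | refl => exact ⟨ReflTransGen.refl, ReflTransGen.refl⟩
  | @tail f g hf hfg ih =>
    have hW₁ := hW (fst_mem_tilde hf)
    have hW₂ := hW (snd_mem_tilde hf)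
    have hg := hf.tail hfg
    rcases hfg.2.2 with ⟨heq, hne⟩ | ⟨heq, hne⟩
    · exact ⟨heq ▸ ih.1, ih.2.tail ⟨hW₂, hW (snd_mem_tilde hg), hne⟩⟩
    · exact ⟨ih.1.tail ⟨hW₁, hW (fst_mem_tilde hg), hne⟩, heq ▸ ih.2⟩

lemma reachable_of_mem_implClass (hG : IsGraph E) {e : α × α} (he : e ∈ E)
    (hW : tilde (implClass E e) ⊆ W) {f : α × α} (hf : f ∈ implClass E e) :
    Reachable E W e.1 f.1 ∧ Reachable E W e.1 f.2 := by
  induction hf with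
  | refl =>
    exact ⟨ReflTransGen.refl, ReflTransGen.single
      ⟨hW (fst_mem_tilde ReflTransGen.refl), hW (snd_mem_tilde ReflTransGen.refl), he⟩⟩
  | @tail f g hf hfg ih =>
    have hg := hf.tail hfg
    have hgW : g.1 ∈ W ∧ g.2 ∈ W := ⟨hW (fst_mem_tilde hg), hW (snd_mem_tilde hg)⟩
    rcases hfg.2.2 with ⟨heq, -⟩ | ⟨heq, -⟩
    · exact ⟨heq ▸ ih.1, (heq ▸ ih.1).tail ⟨hgW.1, hgW.2, hfg.2.1⟩⟩
    · exact ⟨(heq ▸ ih.2).tail ⟨hgW.2, hgW.1, (hG.2 _ _).1 hfg.2.1⟩, heq ▸ ih.2⟩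

lemma adj_of_mem_coComponent {v c : α} (hv : v ∈ W) (ha : a ∈ coComponent E W v) (hc : c ∈ W)
    (hnc : c ∉ coComponent E W v) : (a, c) ∈ E :=
  by_contra fun h => hnc (ReflTransGen.tail ha ⟨ha.mem hv, hc, h⟩)

lemma isPartitiveIn_coComponent {v : α} (hv : v ∈ W) : IsPartitiveIn E W (coComponent E W v) :=
  isPartitiveIn_of_forall_adj (fun _ h => h.mem hv)
    fun _ ha _ hc => adj_of_mem_coComponent hv ha hc.1 hc.2

variable (hG : IsGraph E)
include hG

lemma isStrongPartitiveIn_coComponent {v : α} (hv : v ∈ W) :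
    IsStrongPartitiveIn E W (coComponent E W v) := by
  set C := coComponent E W v
  refine ⟨isPartitiveIn_coComponent hv, fun Y hY ⟨y₀, hy₀Y, hy₀C⟩ => ?_⟩
  by_cases hCY : C ⊆ Y
  · exact Or.inl hCY
  obtain ⟨c, hcC, hcY⟩ := not_subset.1 hCY
  refine Or.inr fun y hyY => by_contra fun hyC => hcY ?_
  have adj_C : ∀ u ∈ W, u ∉ C → ∀ w ∈ C, (u, w) ∈ E := fun u hu huC w hw =>
    (hG.2 _ _).1 (adj_of_mem_coComponent hv hw hu huC)
  -- a co-path from `y₀` to `c` inside `C` cannot leave `Y`, since `y ∈ Y \ C` is joined to `C`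
  have closed : ∀ z ∈ Y ∪ (W \ C), ∀ w ∈ W, w ∉ Y ∪ (W \ C) → (z, w) ∈ E := by
    intro z hz w hw hwZ
    have hwC : w ∈ C := by_contra fun h => hwZ (Or.inr ⟨hw, h⟩)
    rcases hz with hzY | hz
    · exact (hY.adj_iff hyY hzY hw fun h => hwZ (Or.inl h)).1 (adj_C y (hY.1 hyY) hyC w hwC)
    · exact adj_C z hz.1 hz.2 w hwC
  have hpath : CoReachable E W y₀ c := (hy₀C.symm hG).trans hcC
  rcases hpath.mem_of_forall_adj closed (Or.inl hy₀Y) with h | h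
  exacts [h, absurd hcC h.2]

lemma eq_coComponent_of_isMaxStrongPartitiveIn {X : Set α} (hX : IsMaxStrongPartitiveIn E W X)
    {v w : α} (hv : v ∈ W) (hXv : (X ∩ coComponent E W v).Nonempty) (hw : w ∈ W)
    (hvw : ¬ CoReachable E W v w) : X = coComponent E W v := by
  set C := coComponent E W v
  have hCW : C ≠ W := fun h => hvw (show w ∈ C from h ▸ hw)
  rcases hX.1.2 C (isPartitiveIn_coComponent hv) (by rwa [inter_comm]) with hXC | hCX
  · exact hX.2.2 C (isStrongPartitiveIn_coComponent hG hv) hCW hXC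
  -- `C ∪ (W \ X)` is partitive and overlaps `X`, so strongness of `X` pins `X` down to `C`
  have hvX : v ∈ X := hCX ReflTransGen.refl
  have hY : IsPartitiveIn E W (C ∪ (W \ X)) := by
    refine isPartitiveIn_of_forall_adj
      (union_subset (fun _ h => CoReachable.mem h hv) sdiff_subset) ?_
    rintro a (ha | ha) c hc
    · exact adj_of_mem_coComponent hv ha hc.1 fun h => hc.2 (Or.inl h)
    · have hcX : c ∈ X := by_contra fun h => hc.2 (Or.inr ⟨hc.1, h⟩)
      have hva : (v, a) ∈ E := adj_of_mem_coComponent hv ReflTransGen.refl ha.1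
        fun h => ha.2 (hCX h)
      exact (hG.2 _ _).1 ((hX.1.1.adj_iff hvX hcX ha.1 ha.2).1 hva)
  rcases hX.1.2 _ hY ⟨v, Or.inl ReflTransGen.refl, hvX⟩ with hXY | hYX
  · exact hCX.antisymm' fun x hx => (hXY hx).resolve_right fun h => h.2 hx
  · exact absurd (hX.1.1.1.antisymm fun x hx => by_contra fun h => h (hYX (Or.inr ⟨hx, h⟩)))
      hX.2.1

end Reachability

section Quotient

variable {W : Set α} {F : Set (Set α)}

lemma IsPartitionOf.exists_mem (hF : IsPartitionOf W F) {w : α} (hw : w ∈ W) :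
    ∃ X ∈ F, w ∈ X := by
  rw [← hF.2.1] at hw
  exact hw

lemma IsPartitionOf.eq_of_mem (hF : IsPartitionOf W F) {X Y : Set α} (hX : X ∈ F) (hY : Y ∈ F)
    {x : α} (hxX : x ∈ X) (hxY : x ∈ Y) : X = Y :=
  by_contra fun h => (hF.2.2 X hX Y hY h).subset ⟨hxX, hxY⟩

lemma IsPartitionOf.subset (hF : IsPartitionOf W F) {X : Set α} (hX : X ∈ F) : X ⊆ W :=
  fun _ hx => hF.2.1 ▸ ⟨X, hX, hx⟩

variable (hG : IsGraph E) (hF : IsPartitionOf W F) (hblocks : ∀ X ∈ F, IsPartitiveIn E W X)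
include hG hF hblocks

lemma adj_of_quotAdj {X Y : Set α} (hX : X ∈ F) (hY : Y ∈ F) (h : quotAdj E W X Y)
    {x y : α} (hx : x ∈ X) (hy : y ∈ Y) : (x, y) ∈ E := by
  obtain ⟨hne, x₀, hx₀, y₀, hy₀, he, -, hy₀W⟩ := h
  have hxy₀ := ((hblocks X hX).adj_iff hx₀ hx hy₀W fun h => hne (hF.eq_of_mem hX hY h hy₀)).1 he
  have hyx := ((hblocks Y hY).adj_iff hy₀ hy (hF.subset hX hx)
    fun h => hne (hF.eq_of_mem hX hY hx h)).1 ((hG.2 _ _).1 hxy₀)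
  exact (hG.2 _ _).1 hyx

lemma quotAdj_iff {X Y : Set α} (hX : X ∈ F) (hY : Y ∈ F) {x y : α} (hx : x ∈ X)
    (hy : y ∈ Y) : quotAdj E W X Y ↔ X ≠ Y ∧ (x, y) ∈ E :=
  ⟨fun h => ⟨h.1, adj_of_quotAdj hG hF hblocks hX hY h hx hy⟩,
    fun h => ⟨h.1, x, hx, y, hy, h.2, hF.subset hX hx, hF.subset hY hy⟩⟩

lemma isPartitiveIn_sUnion {Q : Set (Set α)} (hQ : IsPartitiveGen F (quotAdj E W) Q) :
    IsPartitiveIn E W (⋃₀ Q) := by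
  refine ⟨sUnion_subset fun X hX => hF.subset (hQ.1 hX), ?_⟩
  rintro a ⟨A, hA, haA⟩ b ⟨B, hB, hbB⟩ c ⟨hcW, hcQ⟩
  obtain ⟨C, hC, hcC⟩ := hF.exists_mem hcW
  have hCQ : C ∉ Q := fun h => hcQ ⟨C, h, hcC⟩
  have hadj : ∀ D ∈ Q, ∀ d ∈ D, ((d, c) ∈ edgesOn E W ↔ quotAdj E W D C) := fun D hD d hd => by
    rw [quotAdj_iff hG hF hblocks (hQ.1 hD) hC hd hcC]
    exact ⟨fun h => ⟨fun h' => hCQ (h' ▸ hD), h.1⟩,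
      fun h => ⟨h.2, hF.subset (hQ.1 hD) hd, hcW⟩⟩
  rw [hadj A hA a haA, hadj B hB b hbB]
  exact hQ.2 A hA B hB C ⟨hC, hCQ⟩

lemma graphIso_image {rep : Set α → α} (hrep : ∀ X ∈ F, rep X ∈ X) :
    GraphIso F (quotAdj E W) (rep '' F) (fun a b => (a, b) ∈ E) := by
  have hinj : InjOn rep F := fun X hX Y hY h =>
    hF.eq_of_mem hX hY (hrep X hX) (h ▸ hrep Y hY)
  refine ⟨rep, hinj.bijOn_image, fun X hX Y hY => ?_⟩
  rw [quotAdj_iff hG hF hblocks hX hY (hrep X hX) (hrep Y hY)]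
  exact ⟨And.right, fun h => ⟨fun hXY => hG.1 (rep X) (hXY ▸ h), h⟩⟩

lemma graphIso_of_existsUnique [Nonempty α] {S : Set α} (hSW : S ⊆ W)
    (huniq : ∀ X ∈ F, ∃! s, s ∈ S ∧ s ∈ X) :
    GraphIso F (quotAdj E W) S (fun a b => (a, b) ∈ E) := by
  choose! rep hrep using fun X hX => (huniq X hX).exists
  convert graphIso_image hG hF hblocks fun X hX => (hrep X hX).2
  refine (image_subset_iff.2 fun X hX => (hrep X hX).1).antisymm' fun s hs => ?_
  obtain ⟨X, hX, hsX⟩ := hF.exists_mem (hSW hs)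
  exact ⟨X, hX, (huniq X hX).unique (hrep X hX) ⟨hs, hsX⟩⟩

lemma exists_subgraph_graphIso [Nonempty α] {M : Set (α × α)}
    (hM : ∀ X ∈ F, ∀ Y ∈ F, X ≠ Y → ∀ x ∈ X, ∀ y ∈ Y, (x, y) ∈ E → (x, y) ∈ M) :
    ∃ V' : Set α, ∃ E' : Set (α × α), IsSubgraphOf E W V' E' ∧ E' ⊆ M ∧
      GraphIso F (quotAdj E W) V' (fun a b => (a, b) ∈ E') := by
  choose! rep hrep using fun X hX => hF.1 X hX
  obtain ⟨f, hbij, hadj⟩ := graphIso_image hG hF hblocks hrep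
  refine ⟨rep '' F, edgesOn E (rep '' F), ⟨?_, ?_, fun e he => he.2, fun a b => ?_⟩, ?_, f, hbij,
    fun X hX Y hY => (hadj X hX Y hY).trans ⟨fun h => ⟨h, hbij.1 hX, hbij.1 hY⟩, And.left⟩⟩
  · rintro _ ⟨X, hX, rfl⟩
    exact hF.subset hX (hrep X hX)
  · rintro e ⟨he, ⟨X, hX, hX1⟩, ⟨Y, hY, hY2⟩⟩
    exact ⟨he, hX1 ▸ hF.subset hX (hrep X hX), hY2 ▸ hF.subset hY (hrep Y hY)⟩
  · exact ⟨fun h => ⟨(hG.2 _ _).1 h.1, h.2.2, h.2.1⟩, fun h => ⟨(hG.2 _ _).1 h.1, h.2.2, h.2.1⟩⟩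
  · rintro ⟨a, b⟩ ⟨he, ⟨X, hX, rfl⟩, ⟨Y, hY, rfl⟩⟩
    exact hM X hX Y hY (fun h => hG.1 (rep X) (h ▸ he)) _ (hrep X hX) _ (hrep Y hY) he

end Quotient

section Simplex

variable {VS : Set α} (hG : IsGraph E) (hS : IsSimplex E VS)
include hG hS

lemma mem_multiplex_iff {e : α × α} :
    e ∈ multiplex E VS ↔ ∃ p ∈ VS, ∃ q ∈ VS, p ≠ q ∧ e ∈ hat (implClass E (p, q)) := by
  constructor
  · rintro ⟨A, hA, heA, a, ha, b, hb, hab, habA | hbaA⟩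
    · exact ⟨a, ha, b, hb, hab, hA.eq_implClass hG habA ▸ heA⟩
    · exact ⟨b, hb, a, ha, hab.symm, hA.eq_implClass hG hbaA ▸ heA⟩
  · rintro ⟨p, hp, q, hq, hpq, he⟩
    exact ⟨_, ⟨_, hS.2.2.1 p hp q hq hpq, rfl⟩, he, p, hp, q, hq, hpq, Or.inl ReflTransGen.refl⟩

lemma mem_tilde_multiplex_iff {w : α} :
    w ∈ tilde (multiplex E VS) ↔ ∃ p ∈ VS, ∃ q ∈ VS, p ≠ q ∧ w ∈ tilde (implClass E (p, q)) := by
  constructor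
  · rintro ⟨z, h | h⟩ <;> obtain ⟨p, hp, q, hq, hpq, h⟩ := (mem_multiplex_iff hG hS).1 h
    · exact ⟨p, hp, q, hq, hpq, tilde_hat (implClass E (p, q)) ▸ ⟨z, Or.inl h⟩⟩
    · exact ⟨p, hp, q, hq, hpq, tilde_hat (implClass E (p, q)) ▸ ⟨z, Or.inr h⟩⟩
  · rintro ⟨p, hp, q, hq, hpq, z, h | h⟩
    · exact ⟨z, Or.inl ((mem_multiplex_iff hG hS).2 ⟨p, hp, q, hq, hpq, Or.inl h⟩)⟩
    · exact ⟨z, Or.inr ((mem_multiplex_iff hG hS).2 ⟨p, hp, q, hq, hpq, Or.inl h⟩)⟩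

lemma subset_tilde_multiplex (hnt : VS.Nontrivial) : VS ⊆ tilde (multiplex E VS) := by
  intro p hp
  obtain ⟨q, hq, hqp⟩ := hnt.exists_ne p
  exact (mem_tilde_multiplex_iff hG hS).2
    ⟨p, hp, q, hq, hqp.symm, fst_mem_tilde ReflTransGen.refl⟩

lemma exists_coReachable_of_mem_tilde_multiplex {w : α} (hw : w ∈ tilde (multiplex E VS)) :
    ∃ s ∈ VS, CoReachable E (tilde (multiplex E VS)) s w := by
  obtain ⟨p, hp, q, hq, hpq, z, h | h⟩ := (mem_tilde_multiplex_iff hG hS).1 hw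
  all_goals have hW : tilde (implClass E (p, q)) ⊆ tilde (multiplex E VS) := fun v hv =>
    (mem_tilde_multiplex_iff hG hS).2 ⟨p, hp, q, hq, hpq, hv⟩
  · exact ⟨p, hp, (coReachable_of_mem_implClass hW h).1⟩
  · exact ⟨q, hq, (coReachable_of_mem_implClass hW h).2⟩

omit hG in
lemma IsSimplex.eq_or_eq_of_hat_implClass_eq {p q p' q' : α} (hp : p ∈ VS) (hq : q ∈ VS)
    (hp' : p' ∈ VS) (hq' : q' ∈ VS) (hpq : p ≠ q) (hp'q' : p' ≠ q')
    (h : hat (implClass E (p, q)) = hat (implClass E (p', q'))) :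
    (p = p' ∧ q = q') ∨ (p = q' ∧ q = p') :=
  hS.2.2.2 p hp q hq p' hp' q' hq' hpq hp'q'
    ⟨_, ⟨_, hS.2.2.1 p hp q hq hpq, rfl⟩, Or.inl ReflTransGen.refl, h ▸ Or.inl ReflTransGen.refl⟩

lemma IsSimplex.disjoint_implClass {r s u : α} (hr : r ∈ VS) (hs : s ∈ VS) (hu : u ∈ VS)
    (hrs : r ≠ s) (hru : r ≠ u) (hsu : s ≠ u) :
    Disjoint (implClass E (r, s)) (implClass E (r, u)) := by
  refine disjoint_left.2 fun e h₁ h₂ => ?_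
  have := hS.eq_or_eq_of_hat_implClass_eq hr hs hr hu hrs hru
    (by rw [← implClass_eq_of_mem hG h₁, implClass_eq_of_mem hG h₂])
  grind

/-- `r` is the apex of a triangle over `pq` with three distinct colors. -/
lemma IsSimplex.adj_of_mem_tilde_implClass {p q r : α} (hp : p ∈ VS) (hq : q ∈ VS) (hr : r ∈ VS)
    (hpq : p ≠ q) (hrp : r ≠ p) (hrq : r ≠ q) {w : α} (hw : w ∈ tilde (implClass E (p, q))) :
    (r, w) ∈ E := by
  refine adj_of_mem_tilde_of_hat_ne hG (hS.2.2.1 r hr p hp hrp) (hS.2.2.1 r hr q hq hrq)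
    (fun h => ?_) (fun h => ?_) hw
  · have := hS.eq_or_eq_of_hat_implClass_eq hp hq hr hp hpq hrp h
    grind
  · have := hS.eq_or_eq_of_hat_implClass_eq hp hq hr hq hpq hrq h
    grind

lemma tilde_multiplex_pair {s t : α} (hVS : VS = {s, t}) (hst : s ≠ t) :
    tilde (multiplex E VS) = tilde (implClass E (s, t)) := by
  ext w
  rw [mem_tilde_multiplex_iff hG hS]
  refine ⟨?_, fun hw => ⟨s, by simp [hVS], t, by simp [hVS], hst, hw⟩⟩
  rintro ⟨p, hp, q, hq, hpq, hw⟩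
  rw [hVS] at hp hq
  rcases hp with rfl | rfl <;> rcases hq with rfl | rfl
  · exact absurd rfl hpq
  · exact hw
  · exact tilde_implClass_swap hG (q, p) ▸ hw
  · exact absurd rfl hpq

section RankTwo

variable (h3 : 3 ≤ VS.ncard)
include h3

omit hG hS in
lemma exists_mem_ne_ne (a b : α) : ∃ r ∈ VS, r ≠ a ∧ r ≠ b := by
  have h2 : ({a, b} : Set α).ncard < VS.ncard :=
    (ncard_insert_le a {b}).trans_lt (by rw [ncard_singleton]; omega)
  obtain ⟨r, hr, hrab⟩ := exists_mem_notMem_of_ncard_lt_ncard h2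
  exact ⟨r, hr, fun h => hrab (Or.inl h), fun h => hrab (Or.inr h)⟩

lemma IsSimplex.eq_of_not_adj_of_not_adj {w u u' : α} (hw : w ∈ tilde (multiplex E VS))
    (hu : u ∈ VS) (hu' : u' ∈ VS) (h : (u, w) ∉ E) (h' : (u', w) ∉ E) : u = u' := by
  by_contra huu'
  obtain ⟨p, hp, q, hq, hpq, hwpq⟩ := (mem_tilde_multiplex_iff hG hS).1 hw
  have mem_pair : ∀ x ∈ VS, (x, w) ∉ E → x = p ∨ x = q := fun x hx hxw => by
    by_contra! hne
    exact hxw (hS.adj_of_mem_tilde_implClass hG hp hq hx hpq hne.1 hne.2 hwpq)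
  obtain ⟨r, hr, hrp, hrq⟩ := exists_mem_ne_ne h3 p q
  have hrw := hS.adj_of_mem_tilde_implClass hG hp hq hr hpq hrp hrq hwpq
  have hru : r ≠ u := by rcases mem_pair u hu h with rfl | rfl <;> assumption
  have hru' : r ≠ u' := by rcases mem_pair u' hu' h' with rfl | rfl <;> assumption
  exact disjoint_left.1 (hS.disjoint_implClass hG hr hu hu' hru hru' huu')
    (ReflTransGen.single ⟨hS.2.2.1 r hr u hu hru, hrw, Or.inl ⟨rfl, h⟩⟩)
    (ReflTransGen.single ⟨hS.2.2.1 r hr u' hu' hru', hrw, Or.inl ⟨rfl, h'⟩⟩)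

/-- A step of the co-path to a non-neighbour `z` keeps `z` adjacent to every `u ≠ s`: otherwise
`z`, which misses at most one simplex vertex, would see a third vertex `r` through edges of both
classes `rs` and `ru`. -/
lemma IsSimplex.mem_implClass_of_coReachable {s y : α} (hs : s ∈ VS)
    (hy : CoReachable E (tilde (multiplex E VS)) s y) :
    ∀ u ∈ VS, u ≠ s → (u, y) ∈ implClass E (u, s) := by
  induction hy with
  | refl => exact fun _ _ _ => ReflTransGen.refl
  | @tail y z _ hyz ih =>
    intro u hu hus
    have huz : (u, z) ∈ E := by
      by_contra huz
      obtain ⟨r, hr, hrs, hru⟩ := exists_mem_ne_ne h3 s u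
      have hrz : (r, z) ∈ E :=
        by_contra fun hrz => hru (hS.eq_of_not_adj_of_not_adj hG h3 hyz.2.1 hr hu hrz huz)
      exact disjoint_left.1 (hS.disjoint_implClass hG hr hs hu hrs hru hus.symm)
        ((ih r hr hrs).tail ⟨implClass_subset (hS.2.2.1 r hr s hs hrs) (ih r hr hrs), hrz,
          Or.inl ⟨rfl, hyz.2.2⟩⟩)
        (ReflTransGen.single ⟨hS.2.2.1 r hr u hu hru, hrz, Or.inl ⟨rfl, huz⟩⟩)
    exact (ih u hu hus).tail ⟨implClass_subset (hS.2.2.1 u hu s hs hus) (ih u hu hus), huz,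
      Or.inl ⟨rfl, hyz.2.2⟩⟩

lemma not_coReachable_of_three_le_ncard {s t : α} (hs : s ∈ VS) (ht : t ∈ VS) (hst : s ≠ t) :
    ¬ CoReachable E (tilde (multiplex E VS)) s t := fun h =>
  hG.1 t (implClass_subset (hS.2.2.1 t ht s hs hst.symm)
    (hS.mem_implClass_of_coReachable hG h3 hs h t ht hst.symm))

end RankTwo

end Simplex

theorem graphIso_quotient_of_not_coReachable (hG : IsGraph E) {VS : Set α} (hS : IsSimplex E VS)
    (hnt : VS.Nontrivial) {F : Set (Set α)} (hF : IsPartitionOf (tilde (multiplex E VS)) F)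
    (hblocks : ∀ X ∈ F, IsMaxStrongPartitiveIn E (tilde (multiplex E VS)) X)
    (hsep : ∀ s ∈ VS, ∀ t ∈ VS, CoReachable E (tilde (multiplex E VS)) s t → s = t) :
    GraphIso F (quotAdj E (tilde (multiplex E VS))) VS (fun a b => (a, b) ∈ E) := by
  have : Nonempty α := ⟨hnt.nonempty.some⟩
  have hVSW := subset_tilde_multiplex hG hS hnt
  refine graphIso_of_existsUnique hG hF (fun X hX => (hblocks X hX).1.1) hVSW fun X hX => ?_
  obtain ⟨x, hx⟩ := hF.1 X hX
  obtain ⟨s, hs, hsx⟩ := exists_coReachable_of_mem_tilde_multiplex hG hS (hF.subset hX hx)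
  obtain ⟨t, ht, hts⟩ := hnt.exists_ne s
  have hX : X = coComponent E _ s := eq_coComponent_of_isMaxStrongPartitiveIn hG (hblocks X hX)
    (hVSW hs) ⟨x, hx, hsx⟩ (hVSW ht) fun h => hts (hsep s hs t ht h).symm
  refine ⟨s, ⟨hs, hX ▸ ReflTransGen.refl⟩, fun s' ⟨hs', hs'X⟩ => (hsep s hs s' hs' ?_).symm⟩
  rwa [hX] at hs'X

section Prime

variable (hG : IsGraph E) {W : Set α}
  (hconn : ∀ a ∈ W, ∀ b ∈ W, Reachable E W a b) (hco : ∀ a ∈ W, ∀ b ∈ W, CoReachable E W a b)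
include hG hconn hco

/-- Otherwise all pairs between `Z` and `Y \ Z` are edges, or none is, which disconnects the
complement or the graph. -/
lemma subset_or_subset_of_subset_union {Y Z : Set α} (hY : IsPartitiveIn E W Y)
    (hZ : IsPartitiveIn E W Z) (hW : W ⊆ Y ∪ Z) : Y ⊆ Z ∨ Z ⊆ Y := by
  by_contra! h
  obtain ⟨⟨r₀, hr₀Y, hr₀Z⟩, ⟨d₀, hd₀Z, hd₀Y⟩⟩ := And.imp not_subset.1 not_subset.1 h
  have cross : ∀ z ∈ Z, ∀ r ∈ W, r ∉ Z → ((z, r) ∈ E ↔ (d₀, r₀) ∈ E) := fun z hz r hr hrZ => by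
    have hrY : r ∈ Y := (hW hr).resolve_right hrZ
    rw [hZ.adj_iff hz hd₀Z hr hrZ, hG.2, hY.adj_iff hrY hr₀Y (hZ.1 hd₀Z) hd₀Y, hG.2]
  by_cases hadj : (d₀, r₀) ∈ E
  · exact hr₀Z ((hco d₀ (hZ.1 hd₀Z) r₀ (hY.1 hr₀Y)).mem_of_forall_adj
      (fun z hz w hw hwZ => (cross z hz w hw hwZ).2 hadj) hd₀Z)
  · exact hr₀Z ((hconn d₀ (hZ.1 hd₀Z) r₀ (hY.1 hr₀Y)).mem_of_forall_not_adj
      (fun z hz w hw hwZ h => hadj ((cross z hz w hw hwZ).1 h)) hd₀Z)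

lemma eq_or_eq_of_subset_union {Y Z : Set α} (hY : IsPartitiveIn E W Y)
    (hZ : IsPartitiveIn E W Z) (hW : W ⊆ Y ∪ Z) : Y = W ∨ Z = W := by
  rcases subset_or_subset_of_subset_union hG hconn hco hY hZ hW with h | h
  · exact Or.inr (hZ.1.antisymm (hW.trans (union_subset h subset_rfl)))
  · exact Or.inl (hY.1.antisymm (hW.trans (union_subset subset_rfl h)))

variable {a b : α} (ha : a ∈ W) (hb : b ∈ W)
  (habs : ∀ Y, IsPartitiveIn E W Y → a ∈ Y → b ∈ Y → Y = W)
include ha hb habs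

/-- The union of all proper partitive sets containing `Z₀` is again proper, since two of them
never cover `a` and `b` together; it is then strong. -/
lemma exists_isStrongPartitiveIn_superset {Z₀ : Set α} (hZ₀ : IsPartitiveIn E W Z₀)
    (hne : Z₀.Nonempty) (hZ₀W : Z₀ ≠ W) :
    ∃ m, Z₀ ⊆ m ∧ IsStrongPartitiveIn E W m ∧ m ≠ W := by
  obtain ⟨z₀, hz₀⟩ := hne
  set 𝒴 := {Y | IsPartitiveIn E W Y ∧ Y ≠ W ∧ Z₀ ⊆ Y}
  have hm : IsPartitiveIn E W (⋃₀ 𝒴) :=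
    IsPartitiveIn.sUnion (fun Y hY => hY.1) fun Y hY => hY.2.2 hz₀
  have hZ₀m : Z₀ ⊆ ⋃₀ 𝒴 := subset_sUnion_of_mem ⟨hZ₀, hZ₀W, subset_rfl⟩
  have hmW : ⋃₀ 𝒴 ≠ W := by
    intro h
    obtain ⟨A, hA, haA⟩ : a ∈ ⋃₀ 𝒴 := h ▸ ha
    obtain ⟨B, hB, hbB⟩ : b ∈ ⋃₀ 𝒴 := h ▸ hb
    have hAB := hA.1.union hB.1 ⟨z₀, hA.2.2 hz₀, hB.2.2 hz₀⟩
    have hcover := (habs _ hAB (Or.inl haA) (Or.inr hbB)).symm.subset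
    exact (eq_or_eq_of_subset_union hG hconn hco hA.1 hB.1 hcover).elim hA.2.1 hB.2.1
  refine ⟨⋃₀ 𝒴, hZ₀m, ⟨hm, fun Y hY hYm => ?_⟩, hmW⟩
  have hYm' := hY.union hm hYm
  by_cases hcover : Y ∪ ⋃₀ 𝒴 = W
  · rcases eq_or_eq_of_subset_union hG hconn hco hY hm hcover.symm.subset with h | h
    exacts [Or.inl (h ▸ hm.1), absurd h hmW]
  · exact Or.inr (subset_union_left.trans
      (subset_sUnion_of_mem ⟨hYm', hcover, hZ₀m.trans subset_union_right⟩))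

theorem indecomposableGen_quotient {F : Set (Set α)} (hF : IsPartitionOf W F)
    (hblocks : ∀ X ∈ F, IsMaxStrongPartitiveIn E W X) : IndecomposableGen F (quotAdj E W) := by
  intro Q hQ
  by_contra! h
  obtain ⟨⟨A, hA, B, hB, hAB⟩, hQF⟩ := h
  obtain ⟨C, hC, hCQ⟩ := not_subset.1 fun h => hQF (hQ.1.antisymm h)
  obtain ⟨c, hc⟩ := hF.1 C hC
  have hU := isPartitiveIn_sUnion hG hF (fun X hX => (hblocks X hX).1.1) hQ
  have hUW : ⋃₀ Q ≠ W := fun h => by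
    obtain ⟨D, hD, hcD⟩ : c ∈ ⋃₀ Q := h ▸ hF.subset hC hc
    exact hCQ (hF.eq_of_mem hC (hQ.1 hD) hc hcD ▸ hD)
  obtain ⟨m, hUm, hm, hmW⟩ := exists_isStrongPartitiveIn_superset hG hconn hco ha hb habs hU
    ((hF.1 A (hQ.1 hA)).mono (subset_sUnion_of_mem hA)) hUW
  have hAm := (hblocks A (hQ.1 hA)).2.2 m hm hmW ((subset_sUnion_of_mem hA).trans hUm)
  obtain ⟨x, hx⟩ := hF.1 B (hQ.1 hB)
  exact hAB (hF.eq_of_mem (hQ.1 hA) (hQ.1 hB) (hAm ▸ hUm ⟨B, hB, hx⟩) hx)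

end Prime

section PrimeGraph

def Dominates (E : Set (α × α)) (u v : α) : Prop :=
  ∀ z, z ≠ u → (z, v) ∈ E → (z, u) ∈ E

variable (hG : IsGraph E) {W : Set α} (hEW : ∀ e ∈ E, e.1 ∈ W ∧ e.2 ∈ W)
  (hprime : IndecomposableGen W fun a b => (a, b) ∈ E)
include hG hEW hprime

lemma tilde_implClass_eq {e : α × α} (he : e ∈ E) : tilde (implClass E e) = W := by
  have hsub : tilde (implClass E e) ⊆ W := by
    rintro v ⟨w, h | h⟩
    exacts [(hEW _ (implClass_subset he h)).1, (hEW _ (implClass_subset he h)).2]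
  refine (hprime _ ⟨hsub, fun a ha b hb c hc => isPartitive_tilde_implClass hG he a ha b hb c hc.2⟩)
    |>.resolve_left fun h => hG.1 e.1 ?_
  have h12 : e.1 = e.2 := h (fst_mem_tilde ReflTransGen.refl) (snd_mem_tilde ReflTransGen.refl)
  exact (Prod.ext rfl h12 : (e.1, e.1) = e) ▸ he

/-- Every color class spans the whole graph, its span being partitive, so the Triangle Lemma
leaves no room for a second class. -/
lemma mem_hat_implClass_of_indecomposable {e f : α × α} (he : e ∈ E) (hf : f ∈ E) :
    f ∈ hat (implClass E e) := by
  obtain ⟨u, v⟩ := f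
  by_contra huv
  have not_eq : hat (implClass E (u, v)) ≠ hat (implClass E e) := fun h =>
    huv (h ▸ Or.inl ReflTransGen.refl)
  obtain ⟨r, hur⟩ : ∃ r, (u, r) ∈ hat (implClass E e) := by
    obtain ⟨r, h | h⟩ : u ∈ tilde (implClass E e) :=
      (tilde_implClass_eq hG hEW hprime he).symm ▸ (hEW _ hf).1
    exacts [⟨r, Or.inl h⟩, ⟨r, Or.inr h⟩]
  have hurE := hat_implClass_subset hG he hur
  have hrv : (r, v) ∈ E := by_contra fun h => huv (mem_hat_implClass_step_right hG he hur h hf)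
  have hur_eq := hat_implClass_eq_of_mem hG hur
  have mem_tilde : ∀ {b c : α}, (b, c) ∈ E → ∀ a ∈ W, a ∈ tilde (implClass E (b, c)) :=
    fun hbc a ha => (tilde_implClass_eq hG hEW hprime hbc).symm ▸ ha
  rcases hat_eq_or_hat_eq_of_mem_tilde hG ((hG.2 _ _).1 hurE) hrv
    (mem_tilde hf r (hEW _ hrv).1) with h | h
  · exact not_eq (h.trans ((hat_implClass_comm hG r u).trans hur_eq))
  rcases hat_eq_or_hat_eq_of_mem_tilde hG ((hG.2 _ _).1 hf) ((hG.2 _ _).1 hrv)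
    (mem_tilde hurE v (hEW _ hf).2) with h' | h'
  · exact not_eq ((hat_implClass_comm hG u v).trans (h'.symm.trans hur_eq))
  · exact not_eq (h.trans ((hat_implClass_comm hG r v).trans (h'.symm.trans hur_eq)))

/-- If every edge had a dominating end, then a vertex `u` together with the neighbours it
dominates would be a nontrivial partitive set, hence everything, and `u` would be universal. -/
lemma exists_adj_not_dominates (hnuniv : ∀ u ∈ W, ∃ v ∈ W, v ≠ u ∧ (u, v) ∉ E)
    (hne : E.Nonempty) : ∃ u v, (u, v) ∈ E ∧ ¬ Dominates E u v ∧ ¬ Dominates E v u := by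
  by_contra! h
  obtain ⟨u, v, huv, hdom⟩ : ∃ u v, (u, v) ∈ E ∧ Dominates E u v := by
    obtain ⟨⟨a, b⟩, hab⟩ := hne
    by_cases hd : Dominates E a b
    exacts [⟨a, b, hab, hd⟩, ⟨b, a, (hG.2 _ _).1 hab, h a b hab hd⟩]
  set T := {x | x = u ∨ ((u, x) ∈ E ∧ Dominates E u x)}
  have hTW : T ⊆ W := by
    rintro x (rfl | ⟨hux, -⟩)
    exacts [(hEW _ huv).1, (hEW _ hux).2]
  have key : ∀ x ∈ T, ∀ c ∈ W \ T, ((x, c) ∈ E ↔ (u, c) ∈ E) := by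
    rintro x (rfl | ⟨hux, hdx⟩) c ⟨-, hcT⟩
    · exact Iff.rfl
    have hcu : c ≠ u := fun h => hcT (Or.inl h)
    refine ⟨fun hxc => (hG.2 _ _).1 (hdx c hcu ((hG.2 _ _).1 hxc)), fun huc => ?_⟩
    exact h u c huc (fun hd => hcT (Or.inr ⟨huc, hd⟩)) x
      (fun hxc => hcT (by subst hxc; exact Or.inr ⟨hux, hdx⟩)) ((hG.2 _ _).1 hux)
  rcases hprime T ⟨hTW, fun a ha b hb c hc => (key a ha c hc).trans (key b hb c hc).symm⟩
    with hT | hT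
  · exact hG.1 u (hT (Or.inl rfl) (Or.inr ⟨huv, hdom⟩) ▸ huv)
  · obtain ⟨w, hw, hwu, huw⟩ := hnuniv u (hEW _ huv).1
    rcases (hT ▸ hw : w ∈ T) with h | h
    exacts [hwu h, huw h.1]

end PrimeGraph

section QuotientEdges

def quotEdges (E : Set (α × α)) (W : Set α) (F : Set (Set α)) : Set (Set α × Set α) :=
  {P | P.1 ∈ F ∧ P.2 ∈ F ∧ quotAdj E W P.1 P.2}

variable (hG : IsGraph E) {W : Set α} {F : Set (Set α)}
include hG

lemma quotAdj_symm {X Y : Set α} (h : quotAdj E W X Y) : quotAdj E W Y X := by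
  obtain ⟨hne, x, hx, y, hy, hxy, hxW, hyW⟩ := h
  exact ⟨hne.symm, y, hy, x, hx, (hG.2 _ _).1 hxy, hyW, hxW⟩

lemma isGraph_quotEdges : IsGraph (quotEdges E W F) :=
  ⟨fun _ h => h.2.2.1 rfl, fun _ _ =>
    ⟨fun h => ⟨h.2.1, h.1, quotAdj_symm hG h.2.2⟩, fun h => ⟨h.2.1, h.1, quotAdj_symm hG h.2.2⟩⟩⟩

omit hG in
lemma IndecomposableGen.quotEdges (h : IndecomposableGen F (quotAdj E W)) :
    IndecomposableGen F fun X Y => (X, Y) ∈ quotEdges E W F := fun Q hQ =>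
  h Q ⟨hQ.1, fun a ha b hb c hc => by
    simpa [TransOrient.quotEdges, hQ.1 ha, hQ.1 hb, hc.1] using hQ.2 a ha b hb c hc⟩

variable (hF : IsPartitionOf W F) (hblocks : ∀ X ∈ F, IsPartitiveIn E W X)
  {e : α × α} (he : e ∈ E)
include hF hblocks

lemma exists_not_mem_quotEdges (hco : ∀ a ∈ W, ∀ b ∈ W, CoReachable E W a b)
    (hproper : ∀ X ∈ F, X ≠ W) {U : Set α} (hU : U ∈ F) :
    ∃ V ∈ F, V ≠ U ∧ (U, V) ∉ quotEdges E W F := by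
  by_contra! h
  obtain ⟨u, hu⟩ := hF.1 U hU
  obtain ⟨w, hw, hwU⟩ := exists_of_ssubset ((hF.subset hU).ssubset_of_ne (hproper U hU))
  refine hwU ((hco u (hF.subset hU hu) w hw).mem_of_forall_adj (fun z hz v hv hvU => ?_) hu)
  obtain ⟨V, hV, hvV⟩ := hF.exists_mem hv
  have hVU : V ≠ U := fun h => hvU (h ▸ hvV)
  exact adj_of_quotAdj hG hF hblocks hU hV (h V hV hVU).2.2 hz hvV

include he

lemma mem_hat_of_quotEdges_right {X Y Y' : Set α} (hXY' : (X, Y') ∈ quotEdges E W F)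
    (hY : Y ∈ F) (hYY' : (Y, Y') ∉ quotEdges E W F) (hne : Y ≠ Y') {x y y' : α} (hx : x ∈ X)
    (hy : y ∈ Y) (hy' : y' ∈ Y') (h : (x, y) ∈ hat (implClass E e)) :
    (x, y') ∈ hat (implClass E e) :=
  mem_hat_implClass_step_right hG he h
    (fun hyy' => hYY' ⟨hY, hXY'.2.1, (quotAdj_iff hG hF hblocks hY hXY'.2.1 hy hy').2 ⟨hne, hyy'⟩⟩)
    (adj_of_quotAdj hG hF hblocks hXY'.1 hXY'.2.1 hXY'.2.2 hx hy')

lemma mem_hat_of_quotEdges_left {X X' Y : Set α} (hX'Y : (X', Y) ∈ quotEdges E W F)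
    (hX : X ∈ F) (hXX' : (X, X') ∉ quotEdges E W F) (hne : X ≠ X') {x x' y : α} (hx : x ∈ X)
    (hx' : x' ∈ X') (hy : y ∈ Y) (h : (x, y) ∈ hat (implClass E e)) :
    (x', y) ∈ hat (implClass E e) :=
  swap_mem_hat (mem_hat_of_quotEdges_right hG hF hblocks he ((isGraph_quotEdges hG).2 _ _ |>.1 hX'Y)
    hX hXX' hne hy hx hx' (swap_mem_hat h))

lemma inter_nonempty_of_mem_implClass {P Q : Set α × Set α}
    (hP : (P.1 ×ˢ P.2 ∩ hat (implClass E e)).Nonempty)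
    (hQ : Q ∈ implClass (quotEdges E W F) P) : (Q.1 ×ˢ Q.2 ∩ hat (implClass E e)).Nonempty := by
  refine mem_of_reflTransGen
    (Z := {P : Set α × Set α | (P.1 ×ˢ P.2 ∩ hat (implClass E e)).Nonempty})
    (fun P Q hP hPQ => ?_) hQ hP
  obtain ⟨hPH, hQH, hstep⟩ := hPQ
  obtain ⟨⟨x, y⟩, ⟨hx, hy⟩, hxy⟩ := hP
  rcases eq_or_ne P Q with rfl | hne
  · exact ⟨_, ⟨hx, hy⟩, hxy⟩
  rcases hstep with ⟨h1, h2⟩ | ⟨h1, h2⟩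
  · obtain ⟨y', hy'⟩ := hF.1 _ hQH.2.1
    exact ⟨(x, y'), ⟨h1 ▸ hx, hy'⟩, mem_hat_of_quotEdges_right hG hF hblocks he (h1 ▸ hQH)
      hPH.2.1 h2 (fun h => hne (Prod.ext h1 h)) hx hy hy' hxy⟩
  · obtain ⟨x', hx'⟩ := hF.1 _ hQH.1
    exact ⟨(x', y), ⟨hx', h1 ▸ hy⟩, mem_hat_of_quotEdges_left hG hF hblocks he (h1 ▸ hQH)
      hPH.1 h2 (fun h => hne (Prod.ext h h1)) hx hx' hy hxy⟩

lemma prod_subset_of_mem_implClass {P Q : Set α × Set α}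
    (hP : P.1 ×ˢ P.2 ⊆ hat (implClass E e)) (hQ : Q ∈ implClass (quotEdges E W F) P) :
    Q.1 ×ˢ Q.2 ⊆ hat (implClass E e) := by
  refine mem_of_reflTransGen (Z := {P : Set α × Set α | P.1 ×ˢ P.2 ⊆ hat (implClass E e)})
    (fun P Q hP hPQ => ?_) hQ hP
  obtain ⟨hPH, hQH, hstep⟩ := hPQ
  rcases eq_or_ne P Q with rfl | hne
  · exact hP
  rintro ⟨x', y'⟩ ⟨hx', hy'⟩
  rcases hstep with ⟨h1, h2⟩ | ⟨h1, h2⟩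
  · obtain ⟨y, hy⟩ := hF.1 _ hPH.2.1
    exact mem_hat_of_quotEdges_right hG hF hblocks he (h1 ▸ hQH) hPH.2.1 h2
      (fun h => hne (Prod.ext h1 h)) (h1 ▸ hx') hy hy' (hP ⟨h1 ▸ hx', hy⟩)
  · obtain ⟨x, hx⟩ := hF.1 _ hPH.1
    exact mem_hat_of_quotEdges_left hG hF hblocks he (h1 ▸ hQH) hPH.1 h2
      (fun h => hne (Prod.ext h h1)) hx hx' (h1 ▸ hy') (hP ⟨hx, h1 ▸ hy'⟩)

/-- Four `Γ`-steps, through a block seen from `U` only and one seen from `V` only. -/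
lemma prod_subset_of_not_dominates {U V : Set α} (hUV : (U, V) ∈ quotEdges E W F)
    (hdUV : ¬ Dominates (quotEdges E W F) U V) (hdVU : ¬ Dominates (quotEdges E W F) V U)
    (hgood : (U ×ˢ V ∩ hat (implClass E e)).Nonempty) : U ×ˢ V ⊆ hat (implClass E e) := by
  have hH := isGraph_quotEdges hG (E := E) (W := W) (F := F)
  obtain ⟨⟨x₀, y₀⟩, ⟨hx₀, hy₀⟩, h₀⟩ := hgood
  obtain ⟨Z₀, hZ₀V, hZ₀U, hZ₀V'⟩ : ∃ Z, Z ≠ V ∧ (Z, U) ∈ quotEdges E W F ∧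
      (Z, V) ∉ quotEdges E W F := by
    simpa [Dominates] using hdVU
  obtain ⟨Z₁, hZ₁U, hZ₁V, hZ₁U'⟩ : ∃ Z, Z ≠ U ∧ (Z, V) ∈ quotEdges E W F ∧
      (Z, U) ∉ quotEdges E W F := by
    simpa [Dominates] using hdUV
  obtain ⟨z₀, hz₀⟩ := hF.1 _ hZ₀U.1
  obtain ⟨z₁, hz₁⟩ := hF.1 _ hZ₁V.1
  rintro ⟨x, y⟩ ⟨hx, hy⟩
  have h₁ : (x₀, z₀) ∈ hat (implClass E e) := mem_hat_of_quotEdges_right hG hF hblocks he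
    ((hH.2 _ _).1 hZ₀U) hUV.2.1 (fun h => hZ₀V' ((hH.2 _ _).1 h)) hZ₀V.symm hx₀ hy₀ hz₀ h₀
  have h₂ : (x₀, y) ∈ hat (implClass E e) := mem_hat_of_quotEdges_right hG hF hblocks he
    hUV hZ₀U.1 hZ₀V' hZ₀V hx₀ hz₀ hy h₁
  have h₃ : (z₁, y) ∈ hat (implClass E e) := mem_hat_of_quotEdges_left hG hF hblocks he
    hZ₁V hUV.1 (fun h => hZ₁U' ((hH.2 _ _).1 h)) hZ₁U.symm hx₀ hz₁ hy h₂
  exact mem_hat_of_quotEdges_left hG hF hblocks he hUV hZ₁V.1 hZ₁U' hZ₁U hz₁ hx hy h₃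

end QuotientEdges

section ColorClassSpan

variable (hG : IsGraph E) {e : α × α}
include hG

lemma reachable_of_mem_tilde_implClass (he : e ∈ E) {a b : α} (ha : a ∈ tilde (implClass E e))
    (hb : b ∈ tilde (implClass E e)) : Reachable E (tilde (implClass E e)) a b := by
  have from_fst : ∀ v ∈ tilde (implClass E e), Reachable E (tilde (implClass E e)) e.1 v := by
    rintro v ⟨z, h | h⟩
    exacts [(reachable_of_mem_implClass hG he subset_rfl h).1,
      (reachable_of_mem_implClass hG he subset_rfl h).2]
  exact ((from_fst a ha).symm hG).trans (from_fst b hb)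

lemma coReachable_of_mem_tilde_implClass (hco : CoReachable E (tilde (implClass E e)) e.1 e.2)
    {a b : α} (ha : a ∈ tilde (implClass E e)) (hb : b ∈ tilde (implClass E e)) :
    CoReachable E (tilde (implClass E e)) a b := by
  have from_fst : ∀ v ∈ tilde (implClass E e), CoReachable E (tilde (implClass E e)) e.1 v := by
    rintro v ⟨z, h | h⟩
    exacts [(coReachable_of_mem_implClass subset_rfl h).1,
      hco.trans (coReachable_of_mem_implClass subset_rfl h).2]
  exact ((from_fst a ha).symm hG).trans (from_fst b hb)

lemma eq_tilde_implClass_of_isPartitiveIn {Y : Set α}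
    (hY : IsPartitiveIn E (tilde (implClass E e)) Y) (h1 : e.1 ∈ Y) (h2 : e.2 ∈ Y) :
    Y = tilde (implClass E e) :=
  hY.1.antisymm (tilde_implClass_subset_of_isPartitiveIn hG hY subset_rfl h1 h2)

variable (he : e ∈ E) (hco : CoReachable E (tilde (implClass E e)) e.1 e.2)
  {F : Set (Set α)} (hF : IsPartitionOf (tilde (implClass E e)) F)
  (hblocks : ∀ X ∈ F, IsMaxStrongPartitiveIn E (tilde (implClass E e)) X)
include he hco hF hblocks

theorem indecomposableGen_quotient_of_coReachable :
    IndecomposableGen F (quotAdj E (tilde (implClass E e))) :=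
  indecomposableGen_quotient hG (fun _ ha _ hb => reachable_of_mem_tilde_implClass hG he ha hb)
    (fun _ ha _ hb => coReachable_of_mem_tilde_implClass hG hco ha hb)
    (fst_mem_tilde ReflTransGen.refl) (snd_mem_tilde ReflTransGen.refl)
    (fun _ hY => eq_tilde_implClass_of_isPartitiveIn hG hY) hF hblocks

theorem mem_hat_implClass_of_adj_of_ne {X Y : Set α} (hX : X ∈ F) (hY : Y ∈ F) (hXY : X ≠ Y)
    {x y : α} (hx : x ∈ X) (hy : y ∈ Y) (hxy : (x, y) ∈ E) : (x, y) ∈ hat (implClass E e) := by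
  set H := quotEdges E (tilde (implClass E e)) F
  have hH : IsGraph H := isGraph_quotEdges hG
  have hHF : ∀ P ∈ H, P.1 ∈ F ∧ P.2 ∈ F := fun P hP => ⟨hP.1, hP.2.1⟩
  have hprime := (indecomposableGen_quotient_of_coReachable hG he hco hF hblocks).quotEdges
  have hpart : ∀ X ∈ F, IsPartitiveIn E _ X := fun X hX => (hblocks X hX).1.1
  obtain ⟨Xs, hXs, hs⟩ := hF.exists_mem (fst_mem_tilde (ReflTransGen.refl : e ∈ implClass E e))
  obtain ⟨Xt, hXt, ht⟩ := hF.exists_mem (snd_mem_tilde (ReflTransGen.refl : e ∈ implClass E e))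
  have hst : (Xs, Xt) ∈ H := ⟨hXs, hXt, fun h : Xs = Xt => (hblocks Xs hXs).2.1
    (eq_tilde_implClass_of_isPartitiveIn hG (hpart Xs hXs) hs (h ▸ ht)),
    e.1, hs, e.2, ht, he, hF.subset hXs hs, hF.subset hXt ht⟩
  obtain ⟨U, V, hUV, hdUV, hdVU⟩ := exists_adj_not_dominates hH hHF hprime
    (fun U hU => (exists_not_mem_quotEdges hG hF hpart
      (fun _ ha _ hb => coReachable_of_mem_tilde_implClass hG hco ha hb)
      (fun X hX => (hblocks X hX).2.1) hU)) ⟨_, hst⟩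
  have hgood : (U ×ˢ V ∩ hat (implClass E e)).Nonempty := by
    have he_st : (Xs ×ˢ Xt ∩ hat (implClass E e)).Nonempty := ⟨e, ⟨hs, ht⟩, Or.inl .refl⟩
    rcases mem_hat_implClass_of_indecomposable hH hHF hprime hst hUV with h | h
    · exact inter_nonempty_of_mem_implClass hG hF hpart he he_st h
    · obtain ⟨⟨v, u⟩, ⟨hv, hu⟩, huv⟩ := inter_nonempty_of_mem_implClass hG hF hpart he he_st h
      exact ⟨(u, v), ⟨hu, hv⟩, swap_mem_hat huv⟩
  have hall := prod_subset_of_not_dominates hG hF hpart he hUV hdUV hdVU hgood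
  have hXYH : (X, Y) ∈ H := ⟨hX, hY, (quotAdj_iff hG hF hpart hX hY hx hy).2 ⟨hXY, hxy⟩⟩
  rcases mem_hat_implClass_of_indecomposable hH hHF hprime hUV hXYH with h | h
  · exact prod_subset_of_mem_implClass hG hF hpart he hall h ⟨hx, hy⟩
  · exact swap_mem_hat (prod_subset_of_mem_implClass hG hF hpart he hall h
      (show (y, x) ∈ Y ×ˢ X from ⟨hy, hx⟩))

end ColorClassSpan

end TransOrient

open TransOrient in
/-- **(Theorem 4.4 (ii),(iii))** Let `M = M(S)` be a multiplex and `F_M` a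
partition of `M̃` into maximal strong partitive sets of `G(M̃)`. If
`rank M = 1`, then `G(M̃)/F_M` is isomorphic to `S`, or is indecomposable and
isomorphic to a subgraph `(V',E')` of `G(M̃)` with `E' ⊆ M`; if `rank M ≥ 2`,
then `G(M̃)/F_M` is isomorphic to `S`. -/
theorem quotient_of_multiplex_by_max_strong_partition
    {V : Type*} (E : Set (V × V)) (hG : IsGraph E)
    (VS : Set V) (hS : IsSimplex E VS)
    (F_M : Set (Set V))
    (hpart : IsPartitionOf (tilde (multiplex E VS)) F_M)
    (hblocks : ∀ X ∈ F_M, IsMaxStrongPartitiveIn E (tilde (multiplex E VS)) X) :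
    (simplexRank VS = 1 →
      (GraphIso F_M (quotAdj E (tilde (multiplex E VS)))
          VS (fun a b : V => (a, b) ∈ E) ∨
        (IndecomposableGen F_M (quotAdj E (tilde (multiplex E VS))) ∧
          ∃ V' : Set V, ∃ E' : Set (V × V),
            IsSubgraphOf E (tilde (multiplex E VS)) V' E' ∧ E' ⊆ multiplex E VS ∧
            GraphIso F_M (quotAdj E (tilde (multiplex E VS)))
              V' (fun a b : V => (a, b) ∈ E')))) ∧
    (2 ≤ simplexRank VS →
      GraphIso F_M (quotAdj E (tilde (multiplex E VS)))
        VS (fun a b : V => (a, b) ∈ E)) := by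
  refine ⟨fun h1 => ?_, fun h2 => ?_⟩
  · obtain ⟨s, t, hst, rfl⟩ := Set.ncard_eq_two.1
      (by unfold simplexRank at h1; omega : VS.ncard = 2)
    have hs : s ∈ ({s, t} : Set V) := Or.inl rfl
    have ht : t ∈ ({s, t} : Set V) := Or.inr rfl
    by_cases hco : CoReachable E (tilde (multiplex E {s, t})) s t
    · have he := hS.2.2.1 s hs t ht hst
      have : Nonempty V := ⟨s⟩
      rw [tilde_multiplex_pair hG hS rfl hst] at hpart hblocks hco ⊢
      refine Or.inr ⟨indecomposableGen_quotient_of_coReachable hG he hco hpart hblocks, ?_⟩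
      exact exists_subgraph_graphIso hG hpart (fun X hX => (hblocks X hX).1.1)
        fun X hX Y hY hXY x hx y hy hxy => (mem_multiplex_iff hG hS).2 ⟨s, hs, t, ht, hst,
          mem_hat_implClass_of_adj_of_ne hG he hco hpart hblocks hX hY hXY hx hy hxy⟩
    · refine Or.inl (graphIso_quotient_of_not_coReachable hG hS (Set.nontrivial_pair hst) hpart
        hblocks ?_)
      rintro a (rfl | rfl) b (rfl | rfl) h
      exacts [rfl, absurd h hco, absurd (h.symm hG) hco, rfl]
  · have h3 : 3 ≤ VS.ncard := by unfold simplexRank at h2; omega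
    exact graphIso_quotient_of_not_coReachable hG hS
      (Set.one_lt_ncard_iff_nontrivial_and_finite.1 (by omega)).1 hpart hblocks
      fun s hs t ht h => by_contra fun hst => not_coReachable_of_three_le_ncard hG hS h3 hs ht hst h
end
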